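/- arXiv:1611.02041 — 11 statements merged into one kernel-verified Lean document; each statement's English description precedes it below -/
import Mathlib

section
/- Let μ be a probability measure on a measurable space Ω, let f : ℝ → ℝ be convex and differentiable with f(1) = 0, and let δ > 0. For any two measurable sets A₁, A₂ ⊆ Ω the following hold: (i) if R_adv(A₁) < 1, then R_adv(A₁) < R_adv(A₂) if and only if μ(A₁) < μ(A₂); (ii) if R_adv(A₁) = 1 and μ(A₁) ≤ μ(A₂), then R_adv(A₂) = 1. (This is the population version of Theorem 1: under the 0-1 loss, the adversarial risk of a classifier depends on the classifier only through the measure of its error set, monotonically.) -/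
open MeasureTheory

/-- The uncertainty set of density ratios: measurable, nonnegative functions `r` with
`∫ f (r ω) ∂μ ≤ δ` and `∫ r ω ∂μ = 1` (both integrals existing). -/
def Uf {Ω : Type*} [MeasurableSpace Ω] (μ : Measure Ω) (f : ℝ → ℝ) (δ : ℝ) :
    Set (Ω → ℝ) :=
  {r | Measurable r ∧ (∀ ω, 0 ≤ r ω) ∧
    Integrable (fun ω => f (r ω)) μ ∧ Integrable r μ ∧
    (∫ ω, f (r ω) ∂μ) ≤ δ ∧ (∫ ω, r ω ∂μ) = 1}

/-- The adversarial risk of a classifier with error set `A` under the 0-1 loss: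
the supremum of `∫_A r dμ` over density ratios `r` in the uncertainty set. -/
noncomputable def Radv {Ω : Type*} [MeasurableSpace Ω] (μ : Measure Ω)
    (f : ℝ → ℝ) (δ : ℝ) (A : Set Ω) : ℝ :=
  sSup {x | ∃ r ∈ Uf μ f δ, x = ∫ ω in A, r ω ∂μ}

/-! Jensen's inequality on `A₁` and `A₁ᶜ` shows that averaging an admissible density `r` over
these two sets keeps it admissible: with `p = μ A₁` and `v = ∫_{A₁} r`, it takes the values
`v / p` and `b = (1 - v) / (1 - p)`. For `μ A₂ = q ≥ p`, spreading the value `b` over an extra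
mass `q - p` costs no divergence by convexity and moves the mass `b (q - p)` into `A₂`. Hence
`R_adv(A₂) ≥ R + (1 - R) (q - p) / (1 - p)` with `R = R_adv(A₁)`, which gives monotonicity,
strict as soon as `R < 1`. -/

open Set

lemma ConvexOn.measureReal_mul_map_div_le_setIntegral {Ω : Type*} [MeasurableSpace Ω]
    {μ : Measure Ω} [IsFiniteMeasure μ] {f : ℝ → ℝ} (hf : ConvexOn ℝ univ f) {g : Ω → ℝ}
    (hg : Integrable g μ) (hfg : Integrable (fun ω => f (g ω)) μ) (s : Set Ω) :
    μ.real s * f ((∫ ω in s, g ω ∂μ) / μ.real s) ≤ ∫ ω in s, f (g ω) ∂μ := by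
  rcases eq_or_ne (μ s) 0 with hs | hs
  · simp [measureReal_def, hs, setIntegral_measure_zero]
  have hjensen := hf.map_set_average_le (hf.continuousOn isOpen_univ) isClosed_univ hs
    (measure_ne_top μ s) (ae_of_all _ fun _ => mem_univ _) hg.integrableOn hfg.integrableOn
  simp only [setAverage_eq, smul_eq_mul, inv_mul_eq_div] at hjensen
  have hpos : 0 < μ.real s := ENNReal.toReal_pos hs (measure_ne_top μ s)
  rwa [le_div_iff₀' hpos] at hjensen

lemma ConvexOn.add_mul_map_div_le {s : Set ℝ} {f : ℝ → ℝ} (hf : ConvexOn ℝ s f) {x y : ℝ}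
    (hx : x ∈ s) (hy : y ∈ s) {p w : ℝ} (hp : 0 ≤ p) (hw : 0 ≤ w) :
    (p + w) * f ((p * x + w * y) / (p + w)) ≤ p * f x + w * f y := by
  rcases hp.eq_or_lt with rfl | hp
  · rcases hw.eq_or_lt with rfl | hw
    · simp
    · simp [hw.ne']
  have hpw : 0 < p + w := by linarith
  have hconv := hf.2 hx hy (div_nonneg hp.le hpw.le) (div_nonneg hw hpw.le)
    (by field_simp)
  simp only [smul_eq_mul] at hconv
  calc (p + w) * f ((p * x + w * y) / (p + w))
      = (p + w) * f (p / (p + w) * x + w / (p + w) * y) := by congr 2; field_simp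
    _ ≤ (p + w) * (p / (p + w) * f x + w / (p + w) * f y) := by gcongr
    _ = p * f x + w * f y := by field_simp

section Uf

variable {Ω : Type*} [MeasurableSpace Ω] {μ : Measure Ω} {f : ℝ → ℝ} {δ : ℝ}

lemma setIntegral_le_one_of_mem_Uf {r : Ω → ℝ} (hr : r ∈ Uf μ f δ) (A : Set Ω) :
    ∫ ω in A, r ω ∂μ ≤ 1 :=
  hr.2.2.2.2.2 ▸ setIntegral_le_integral hr.2.2.2.1 (ae_of_all _ hr.2.1)

variable [IsProbabilityMeasure μ]

lemma const_one_mem_Uf (hf1 : f 1 = 0) (hδ : 0 ≤ δ) : (fun _ : Ω => (1 : ℝ)) ∈ Uf μ f δ :=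
  ⟨measurable_const, fun _ => zero_le_one, integrable_const _, integrable_const 1,
    by simpa [hf1] using hδ, by simp⟩

lemma piecewise_const_mem_Uf {s : Set Ω} [DecidablePred (· ∈ s)] (hs : MeasurableSet s)
    {x y : ℝ} (hx : 0 ≤ x) (hy : 0 ≤ y) (hmass : μ.real s * x + (1 - μ.real s) * y = 1)
    (hdiv : μ.real s * f x + (1 - μ.real s) * f y ≤ δ) :
    s.piecewise (fun _ => x) (fun _ => y) ∈ Uf μ f δ := by
  have hcomp : (fun ω => f (s.piecewise (fun _ => x) (fun _ => y) ω))
      = s.piecewise (fun _ => f x) (fun _ => f y) :=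
    funext fun _ => apply_piecewise s _ _ fun _ => f
  have hint : ∀ a b : ℝ, Integrable (s.piecewise (fun _ => a) (fun _ => b)) μ := fun a b =>
    Integrable.piecewise hs (integrable_const a).integrableOn (integrable_const b).integrableOn
  have hintegral : ∀ a b : ℝ, ∫ ω, s.piecewise (fun _ => a) (fun _ => b) ω ∂μ
      = μ.real s * a + (1 - μ.real s) * b := fun a b => by
    rw [integral_piecewise hs (integrable_const a).integrableOn (integrable_const b).integrableOn,
      setIntegral_const, setIntegral_const, probReal_compl_eq_one_sub hs, smul_eq_mul, smul_eq_mul]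
  refine ⟨measurable_const.piecewise hs measurable_const, fun ω => ?_, hcomp ▸ hint _ _,
    hint x y, ?_, ?_⟩
  · by_cases hω : ω ∈ s <;> simp [hω, hx, hy]
  · rwa [hcomp, hintegral]
  · rw [hintegral, hmass]

lemma two_point_le_integral_of_mem_Uf (hf : ConvexOn ℝ univ f) {r : Ω → ℝ} (hr : r ∈ Uf μ f δ)
    {s : Set Ω} (hs : MeasurableSet s) :
    μ.real s * f ((∫ ω in s, r ω ∂μ) / μ.real s)
      + (1 - μ.real s) * f ((1 - ∫ ω in s, r ω ∂μ) / (1 - μ.real s)) ≤ ∫ ω, f (r ω) ∂μ := by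
  obtain ⟨-, -, hfr, hri, -, hr1⟩ := hr
  have hcompl : ∫ ω in sᶜ, r ω ∂μ = 1 - ∫ ω in s, r ω ∂μ := by
    rw [← hr1, ← integral_add_compl hs hri, add_sub_cancel_left]
  have hs' := hf.measureReal_mul_map_div_le_setIntegral hri hfr s
  have hsc := hf.measureReal_mul_map_div_le_setIntegral hri hfr sᶜ
  rw [hcompl, probReal_compl_eq_one_sub hs] at hsc
  linarith [integral_add_compl hs hfr]

lemma exists_mem_Uf_setIntegral_eq (hf : ConvexOn ℝ univ f) {A₁ A₂ : Set Ω}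
    (hA₁ : MeasurableSet A₁) (hA₂ : MeasurableSet A₂) (hpq : μ.real A₁ ≤ μ.real A₂)
    (hp1 : μ.real A₁ < 1) {r : Ω → ℝ} (hr : r ∈ Uf μ f δ) :
    ∃ r' ∈ Uf μ f δ, ∫ ω in A₂, r' ω ∂μ = ∫ ω in A₁, r ω ∂μ
      + (1 - ∫ ω in A₁, r ω ∂μ) * ((μ.real A₂ - μ.real A₁) / (1 - μ.real A₁)) := by
  classical
  set p := μ.real A₁
  set q := μ.real A₂
  set v := ∫ ω in A₁, r ω ∂μ
  have hp0 : 0 ≤ p := measureReal_nonneg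
  have hv0 : 0 ≤ v := integral_nonneg hr.2.1
  have hv1 : v ≤ 1 := setIntegral_le_one_of_mem_Uf hr A₁
  set a := v / p
  set b := (1 - v) / (1 - p)
  set c := (p * a + (q - p) * b) / q
  have hb0 : 0 ≤ b := div_nonneg (by linarith) (by linarith)
  -- `a` is a junk value when `μ A₁ = 0`, but then `v = 0` as well
  have hpa : p * a = v := by
    rcases hp0.eq_or_lt with hp | hp
    · have hA₁0 : μ A₁ = 0 := (measureReal_eq_zero_iff (measure_ne_top μ A₁)).1 hp.symm
      simp [← hp, v, setIntegral_measure_zero _ hA₁0]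
    · exact mul_div_cancel₀ v hp.ne'
  have hpb : (1 - p) * b = 1 - v := mul_div_cancel₀ _ (by linarith)
  have hqc : q * c = p * a + (q - p) * b := by
    rcases (hp0.trans hpq).eq_or_lt with hq | hq
    · have hp : p = 0 := by linarith
      simp [← hq, hp]
    · exact mul_div_cancel₀ _ hq.ne'
  have hc0 : 0 ≤ c :=
    div_nonneg (hpa ▸ add_nonneg hv0 (mul_nonneg (sub_nonneg.2 hpq) hb0)) (hp0.trans hpq)
  have hcoarse := two_point_le_integral_of_mem_Uf hf hr hA₁
  have hconv := hf.add_mul_map_div_le (mem_univ a) (mem_univ b) hp0 (sub_nonneg.2 hpq)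
  rw [add_sub_cancel] at hconv
  refine ⟨A₂.piecewise (fun _ => c) (fun _ => b), piecewise_const_mem_Uf hA₂ hc0 hb0 ?_ ?_, ?_⟩
  · linear_combination hqc + hpa + hpb
  · linarith [hr.2.2.2.2.1]
  · rw [setIntegral_congr_fun (g := fun _ => c) hA₂ fun _ hω => piecewise_eq_of_mem A₂ _ _ hω,
      setIntegral_const, smul_eq_mul, hqc, hpa]
    simp only [b]
    ring

end Uf

section Radv

variable {Ω : Type*} [MeasurableSpace Ω] {μ : Measure Ω} {f : ℝ → ℝ} {δ : ℝ}

lemma setIntegral_le_Radv {r : Ω → ℝ} (hr : r ∈ Uf μ f δ) (A : Set Ω) :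
    ∫ ω in A, r ω ∂μ ≤ Radv μ f δ A :=
  le_csSup ⟨1, by rintro _ ⟨r, hr, rfl⟩; exact setIntegral_le_one_of_mem_Uf hr A⟩ ⟨r, hr, rfl⟩

variable [IsProbabilityMeasure μ]

lemma measureReal_le_Radv (hf1 : f 1 = 0) (hδ : 0 ≤ δ) (A : Set Ω) :
    μ.real A ≤ Radv μ f δ A := by
  simpa using setIntegral_le_Radv (const_one_mem_Uf hf1 hδ) A

lemma Radv_le_one (hf1 : f 1 = 0) (hδ : 0 ≤ δ) (A : Set Ω) : Radv μ f δ A ≤ 1 :=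
  csSup_le ⟨_, _, const_one_mem_Uf hf1 hδ, rfl⟩ <| by
    rintro _ ⟨r, hr, rfl⟩
    exact setIntegral_le_one_of_mem_Uf hr A

lemma Radv_add_mul_le (hf : ConvexOn ℝ univ f) (hf1 : f 1 = 0) (hδ : 0 ≤ δ) {A₁ A₂ : Set Ω}
    (hA₁ : MeasurableSet A₁) (hA₂ : MeasurableSet A₂) (hpq : μ.real A₁ ≤ μ.real A₂)
    (hp1 : μ.real A₁ < 1) :
    Radv μ f δ A₁ + (1 - Radv μ f δ A₁) * ((μ.real A₂ - μ.real A₁) / (1 - μ.real A₁))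
      ≤ Radv μ f δ A₂ := by
  set t := (μ.real A₂ - μ.real A₁) / (1 - μ.real A₁)
  have ht1 : t ≤ 1 := div_le_one_of_le₀ (by linarith [measureReal_le_one (μ := μ) (s := A₂)])
    (by linarith)
  suffices (1 - t) * Radv μ f δ A₁ ≤ Radv μ f δ A₂ - t by linarith
  rw [Radv, ← smul_eq_mul, ← Real.sSup_smul_of_nonneg (sub_nonneg.2 ht1)]
  refine csSup_le (Nonempty.smul_set ⟨_, _, const_one_mem_Uf hf1 hδ, rfl⟩) ?_
  rintro _ ⟨_, ⟨r, hr, rfl⟩, rfl⟩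
  obtain ⟨r', hr', hval⟩ := exists_mem_Uf_setIntegral_eq hf hA₁ hA₂ hpq hp1 hr
  simp only [smul_eq_mul]
  linarith [setIntegral_le_Radv hr' A₂]

lemma Radv_mono (hf : ConvexOn ℝ univ f) (hf1 : f 1 = 0) (hδ : 0 ≤ δ) {A B : Set Ω}
    (hA : MeasurableSet A) (hB : MeasurableSet B) (hAB : μ A ≤ μ B) :
    Radv μ f δ A ≤ Radv μ f δ B := by
  have hpq : μ.real A ≤ μ.real B := ENNReal.toReal_mono (measure_ne_top μ B) hAB
  rcases lt_or_ge (μ.real A) 1 with hp1 | hp1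
  · have hgain : 0 ≤ (1 - Radv μ f δ A) * ((μ.real B - μ.real A) / (1 - μ.real A)) :=
      mul_nonneg (sub_nonneg.2 (Radv_le_one hf1 hδ A)) (div_nonneg (by linarith) (by linarith))
    linarith [Radv_add_mul_le hf hf1 hδ hA hB hpq hp1]
  · calc Radv μ f δ A ≤ 1 := Radv_le_one hf1 hδ A
      _ ≤ μ.real B := hp1.trans hpq
      _ ≤ Radv μ f δ B := measureReal_le_Radv hf1 hδ B

lemma Radv_lt_Radv (hf : ConvexOn ℝ univ f) (hf1 : f 1 = 0) (hδ : 0 ≤ δ) {A B : Set Ω}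
    (hA : MeasurableSet A) (hB : MeasurableSet B) (hR : Radv μ f δ A < 1) (hAB : μ A < μ B) :
    Radv μ f δ A < Radv μ f δ B := by
  have hpq : μ.real A < μ.real B :=
    (ENNReal.toReal_lt_toReal (measure_ne_top μ A) (measure_ne_top μ B)).2 hAB
  have hp1 : μ.real A < 1 := (measureReal_le_Radv hf1 hδ A).trans_lt hR
  have hgain : 0 < (1 - Radv μ f δ A) * ((μ.real B - μ.real A) / (1 - μ.real A)) :=
    mul_pos (by linarith) (div_pos (by linarith) (by linarith))
  linarith [Radv_add_mul_le hf hf1 hδ hA hB hpq.le hp1]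

end Radv

theorem stmt0_general {Ω : Type*} [MeasurableSpace Ω] (μ : Measure Ω) [IsProbabilityMeasure μ]
    (f : ℝ → ℝ) (hconv : ConvexOn ℝ Set.univ f)
    (hf1 : f 1 = 0) (δ : ℝ) (hδ : 0 < δ)
    (A₁ A₂ : Set Ω) (hA₁ : MeasurableSet A₁) (hA₂ : MeasurableSet A₂) :
    (Radv μ f δ A₁ < 1 → (Radv μ f δ A₁ < Radv μ f δ A₂ ↔ μ A₁ < μ A₂)) ∧
    (Radv μ f δ A₁ = 1 → μ A₁ ≤ μ A₂ → Radv μ f δ A₂ = 1) := by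
  refine ⟨fun hR => ⟨fun hlt => ?_, Radv_lt_Radv hconv hf1 hδ.le hA₁ hA₂ hR⟩, fun hR hle => ?_⟩
  · by_contra! hge
    exact (Radv_mono hconv hf1 hδ.le hA₂ hA₁ hge).not_gt hlt
  · exact le_antisymm (Radv_le_one hf1 hδ.le A₂) (hR ▸ Radv_mono hconv hf1 hδ.le hA₁ hA₂ hle)

/-- Population version of Theorem 1: with the 0-1 loss, the adversarial risk is a
monotonic function of the ordinary risk `μ A`. -/
theorem stmt0 {Ω : Type*} [MeasurableSpace Ω] (μ : Measure Ω) [IsProbabilityMeasure μ]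
    (f : ℝ → ℝ) (hconv : ConvexOn ℝ Set.univ f) (hdiff : Differentiable ℝ f)
    (hf1 : f 1 = 0) (δ : ℝ) (hδ : 0 < δ)
    (A₁ A₂ : Set Ω) (hA₁ : MeasurableSet A₁) (hA₂ : MeasurableSet A₂) :
    (Radv μ f δ A₁ < 1 → (Radv μ f δ A₁ < Radv μ f δ A₂ ↔ μ A₁ < μ A₂)) ∧
    (Radv μ f δ A₁ = 1 → μ A₁ ≤ μ A₂ → Radv μ f δ A₂ = 1) :=
  stmt0_general μ f hconv hf1 δ hδ A₁ A₂ hA₁ hA₂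
end

section
/- Let f : ℝ → ℝ be convex and differentiable with f(1) = 0, let δ > 0 and N ∈ ℕ, N ≥ 1. For a vector of 0-1 losses ℓ ∈ {0,1}^N define the empirical risk R̂(ℓ) = (1/N)∑_{i=1}^N ℓ_i and the adversarial empirical risk R̂_adv(ℓ) = sup_{r ∈ Û_f} (1/N)∑_{i=1}^N r_i ℓ_i. Then for any ℓ, ℓ' ∈ {0,1}^N: (i) if R̂_adv(ℓ) < 1, then R̂_adv(ℓ) < R̂_adv(ℓ') if and only if R̂(ℓ) < R̂(ℓ'); (ii) if R̂_adv(ℓ) = 1 and R̂(ℓ) ≤ R̂(ℓ'), then R̂_adv(ℓ') = 1. -/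
/-- The empirical uncertainty set
`Û_f = { r : (1/N)∑ f(rᵢ) ≤ δ, (1/N)∑ rᵢ = 1, rᵢ ≥ 0 }`. -/
def UfEmp (N : ℕ) (f : ℝ → ℝ) (δ : ℝ) : Set (Fin N → ℝ) :=
  {r | (1 / (N : ℝ)) * ∑ i, f (r i) ≤ δ ∧ (1 / (N : ℝ)) * ∑ i, r i = 1 ∧ ∀ i, 0 ≤ r i}

/-- The empirical risk `(1/N)∑ ℓᵢ`. -/
noncomputable def Rhat (N : ℕ) (ℓ : Fin N → ℝ) : ℝ := (1 / (N : ℝ)) * ∑ i, ℓ i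

/-- The adversarial empirical risk `sup_{r ∈ Û_f} (1/N)∑ rᵢ ℓᵢ`. -/
noncomputable def RhatAdv (N : ℕ) (f : ℝ → ℝ) (δ : ℝ) (ℓ : Fin N → ℝ) : ℝ :=
  sSup {x | ∃ r ∈ UfEmp N f δ, x = (1 / (N : ℝ)) * ∑ i, r i * ℓ i}

/-!
The uncertainty set `Û_f` is invariant under permutations of the coordinates, so the adversarial
risk of a 0-1 loss vector only depends on its number of ones, and it is monotone in that number.
For strictness, take `r ∈ Û_f` with empirical value `v` on the support of `ℓ`. The mass
`N (1 - v)` of `r` off that support sits on at most `N` coordinates, so one of them carries weight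
at least `1 - v`; swapping it onto a coordinate where `ℓ'` is `1` and `ℓ` is `0` gives a point of
`Û_f` whose value on `ℓ'` is at least `v + (1 - v) / N`. Taking suprema,
`R̂_adv(ℓ') ≥ R̂_adv(ℓ) + (1 - R̂_adv(ℓ)) / N`, which is strictly larger when `R̂_adv(ℓ) < 1`.
-/

open Finset

lemma mul_csSup_add_le {s : Set ℝ} (hs : s.Nonempty) {c d x : ℝ} (hc : 0 ≤ c)
    (h : ∀ v ∈ s, c * v + d ≤ x) : c * sSup s + d ≤ x := by
  rcases hc.eq_or_lt with rfl | hc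
  · obtain ⟨v, hv⟩ := hs
    simpa using h v hv
  · have : sSup s ≤ (x - d) / c :=
      csSup_le hs fun v hv => (le_div_iff₀' hc).2 (by linarith [h v hv])
    rw [le_div_iff₀' hc] at this
    linarith

section ZeroOneVectors

variable {ι : Type*} [Fintype ι] {ℓ ℓ' : ι → ℝ}

lemma sum_eq_card_filter_of_zero_or_one (hℓ : ∀ i, ℓ i = 0 ∨ ℓ i = 1) :
    ∑ i, ℓ i = #{i | ℓ i = 1} := by
  rw [natCast_card_filter]
  refine sum_congr rfl fun i _ => ?_
  rcases hℓ i with h | h <;> simp [h]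

lemma exists_perm_le_comp_of_sum_le [DecidableEq ι] (hℓ : ∀ i, ℓ i = 0 ∨ ℓ i = 1)
    (hℓ' : ∀ i, ℓ' i = 0 ∨ ℓ' i = 1) (hsum : ∑ i, ℓ i ≤ ∑ i, ℓ' i) :
    ∃ σ : Equiv.Perm ι, ∀ i, ℓ i ≤ ℓ' (σ i) := by
  rw [sum_eq_card_filter_of_zero_or_one hℓ, sum_eq_card_filter_of_zero_or_one hℓ',
    Nat.cast_le] at hsum
  obtain ⟨t, hts, ht⟩ := exists_subset_card_eq hsum
  obtain ⟨σ, hσ⟩ := Equiv.Perm.exists_map_finset_eq _ t ht.symm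
  refine ⟨σ, fun i => ?_⟩
  rcases hℓ i with h | h
  · rcases hℓ' (σ i) with h' | h' <;> simp [h, h']
  · have : σ i ∈ t := hσ ▸ mem_map_of_mem _ (by simp [h])
    simpa [h] using (mem_filter.1 (hts this)).2.ge

end ZeroOneVectors

section UncertaintySet

variable {N : ℕ} {f : ℝ → ℝ} {δ : ℝ} {r ℓ ℓ' : Fin N → ℝ}

lemma pos_of_mem_ufEmp (hr : r ∈ UfEmp N f δ) : 0 < N := by
  rcases N.eq_zero_or_pos with rfl | hN
  · simpa using hr.2.1
  · exact hN

lemma pos_of_ufEmp_nonempty (hU : (UfEmp N f δ).Nonempty) : 0 < N :=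
  pos_of_mem_ufEmp hU.some_mem

lemma sum_eq_of_mem_ufEmp (hr : r ∈ UfEmp N f δ) : ∑ i, r i = N := by
  have hN : (0 : ℝ) < N := by exact_mod_cast pos_of_mem_ufEmp hr
  have h := hr.2.1
  field_simp at h
  exact h

lemma ufEmp_nonempty (hN : 0 < N) (hf1 : f 1 = 0) (hδ : 0 ≤ δ) : (UfEmp N f δ).Nonempty :=
  ⟨1, by simp [UfEmp, hf1, hδ, hN.ne']⟩

lemma comp_perm_mem_ufEmp (σ : Equiv.Perm (Fin N)) (hr : r ∈ UfEmp N f δ) :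
    r ∘ σ ∈ UfEmp N f δ := by
  simp only [UfEmp, Set.mem_ofPred_eq, Function.comp_apply, Equiv.sum_comp σ (fun i => f (r i)),
    Equiv.sum_comp σ r]
  exact ⟨hr.1, hr.2.1, fun i => hr.2.2 (σ i)⟩

lemma rhat_mono (h : ∀ i, ℓ i ≤ ℓ' i) : Rhat N ℓ ≤ Rhat N ℓ' :=
  mul_le_mul_of_nonneg_left (sum_le_sum fun i _ => h i) (by positivity)

lemma rhat_comp_perm (σ : Equiv.Perm (Fin N)) : Rhat N (ℓ ∘ σ) = Rhat N ℓ := by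
  simp only [Rhat, Function.comp_apply, Equiv.sum_comp σ ℓ]

lemma rhat_mul_le_one (hr : r ∈ UfEmp N f δ) (hℓ : ∀ i, ℓ i ≤ 1) : Rhat N (r * ℓ) ≤ 1 :=
  (rhat_mono fun i => mul_le_of_le_one_right (hr.2.2 i) (hℓ i)).trans_eq hr.2.1

lemma rhatAdv_eq_sSup_image :
    RhatAdv N f δ ℓ = sSup ((fun r => Rhat N (r * ℓ)) '' UfEmp N f δ) := by
  simp only [RhatAdv, Set.image, Rhat, Pi.mul_apply, eq_comm]

lemma rhat_mul_le_rhatAdv (hr : r ∈ UfEmp N f δ) (hℓ : ∀ i, ℓ i ≤ 1) :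
    Rhat N (r * ℓ) ≤ RhatAdv N f δ ℓ := by
  rw [rhatAdv_eq_sSup_image]
  exact le_csSup ⟨1, by rintro _ ⟨r, hr, rfl⟩; exact rhat_mul_le_one hr hℓ⟩ ⟨r, hr, rfl⟩

lemma rhatAdv_le_one (hℓ : ∀ i, ℓ i ≤ 1) : RhatAdv N f δ ℓ ≤ 1 := by
  rw [rhatAdv_eq_sSup_image]
  exact Real.sSup_le (by rintro _ ⟨r, hr, rfl⟩; exact rhat_mul_le_one hr hℓ) zero_le_one

lemma rhatAdv_comp_perm (σ : Equiv.Perm (Fin N)) : RhatAdv N f δ (ℓ ∘ σ) = RhatAdv N f δ ℓ := by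
  simp only [rhatAdv_eq_sSup_image]
  congr 1
  ext x
  constructor
  · rintro ⟨r, hr, rfl⟩
    refine ⟨r ∘ σ.symm, comp_perm_mem_ufEmp _ hr, ?_⟩
    dsimp only
    rw [← rhat_comp_perm σ]
    congr 1
    ext i
    simp
  · rintro ⟨r, hr, rfl⟩
    exact ⟨r ∘ σ, comp_perm_mem_ufEmp σ hr, rhat_comp_perm (ℓ := r * ℓ) σ⟩

lemma rhatAdv_mono_of_le (hU : (UfEmp N f δ).Nonempty) (hℓ' : ∀ i, ℓ' i ≤ 1)
    (h : ∀ i, ℓ i ≤ ℓ' i) : RhatAdv N f δ ℓ ≤ RhatAdv N f δ ℓ' := by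
  rw [rhatAdv_eq_sSup_image (ℓ := ℓ)]
  refine csSup_le (hU.image _) ?_
  rintro _ ⟨r, hr, rfl⟩
  exact (rhat_mono fun i => mul_le_mul_of_nonneg_left (h i) (hr.2.2 i)).trans
    (rhat_mul_le_rhatAdv hr hℓ')

lemma one_sub_rhat_mul_le (hr : r ∈ UfEmp N f δ) (hℓ : ∀ i, ℓ i = 0 ∨ ℓ i = 1) {k : Fin N}
    (hk : ∀ i, ℓ i = 0 → r i ≤ r k) : 1 - Rhat N (r * ℓ) ≤ r k := by
  have hN : (0 : ℝ) < N := by exact_mod_cast pos_of_mem_ufEmp hr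
  have hsplit : ∑ i, r i * ℓ i + ∑ i with ℓ i = 0, r i = N := by
    rw [sum_filter, ← sum_add_distrib, ← sum_eq_of_mem_ufEmp hr]
    refine sum_congr rfl fun i _ => ?_
    rcases hℓ i with h | h <;> simp [h]
  have hmax : ∑ i with ℓ i = 0, r i ≤ N * r k := calc
    _ ≤ #{i | ℓ i = 0} • r k := sum_le_card_nsmul _ _ _ fun i hi => hk i (mem_filter.1 hi).2
    _ ≤ N * r k := by
      rw [nsmul_eq_mul]
      gcongr
      · exact hr.2.2 k
      · exact_mod_cast (card_le_univ _).trans (Fintype.card_fin N).le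
  simp only [Rhat, Pi.mul_apply]
  field_simp
  linarith

lemma rhat_mul_add_le_rhatAdv (hr : r ∈ UfEmp N f δ) (hℓ : ∀ i, ℓ i = 0 ∨ ℓ i = 1)
    (hℓ' : ∀ i, ℓ' i ≤ 1) (hle : ∀ i, ℓ i ≤ ℓ' i) {j : Fin N} (hj0 : ℓ j = 0) (hj1 : ℓ' j = 1) :
    (1 - 1 / N) * Rhat N (r * ℓ) + 1 / N ≤ RhatAdv N f δ ℓ' := by
  obtain ⟨k, hkT, hk⟩ := (univ.filter (ℓ · = 0)).exists_max_image r ⟨j, by simp [hj0]⟩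
  have hk0 : ℓ k = 0 := (mem_filter.1 hkT).2
  set σ := Equiv.swap j k
  have hℓσ : ℓ ∘ σ = ℓ := by
    funext i
    simp only [Function.comp_apply, σ, Equiv.swap_apply_def]
    split_ifs <;> simp [*]
  have hval : Rhat N ((r ∘ σ) * ℓ) = Rhat N (r * ℓ) := by
    conv_lhs => rw [← hℓσ]
    exact rhat_comp_perm (ℓ := r * ℓ) σ
  have hgain : Rhat N ((r ∘ σ) * ℓ) + r k / N ≤ Rhat N ((r ∘ σ) * ℓ') := by
    have hterm := single_le_sum (fun i _ => mul_nonneg (hr.2.2 (σ i)) (sub_nonneg.2 (hle i)))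
      (mem_univ j)
    simp only [σ, Equiv.swap_apply_left, hj0, hj1, sub_zero, mul_one,
      mul_sub, sum_sub_distrib] at hterm
    simp only [Rhat, Pi.mul_apply, Function.comp_apply]
    calc _ = 1 / (N : ℝ) * (∑ i, r (σ i) * ℓ i + r k) := by ring
      _ ≤ _ := by gcongr; linarith
  have hmass := one_sub_rhat_mul_le hr hℓ fun i hi => hk i (by simp [hi])
  calc (1 - 1 / N) * Rhat N (r * ℓ) + 1 / N = Rhat N (r * ℓ) + (1 - Rhat N (r * ℓ)) / N := by
        ring
    _ ≤ Rhat N (r * ℓ) + r k / N := by gcongr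
    _ ≤ Rhat N ((r ∘ σ) * ℓ') := hval ▸ hgain
    _ ≤ RhatAdv N f δ ℓ' := rhat_mul_le_rhatAdv (comp_perm_mem_ufEmp σ hr) hℓ'

lemma rhatAdv_mono_of_rhat_le (hU : (UfEmp N f δ).Nonempty) (hℓ : ∀ i, ℓ i = 0 ∨ ℓ i = 1)
    (hℓ' : ∀ i, ℓ' i = 0 ∨ ℓ' i = 1) (h : Rhat N ℓ ≤ Rhat N ℓ') :
    RhatAdv N f δ ℓ ≤ RhatAdv N f δ ℓ' := by
  have hN : (0 : ℝ) < N := by exact_mod_cast pos_of_ufEmp_nonempty hU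
  obtain ⟨σ, hσ⟩ := exists_perm_le_comp_of_sum_le hℓ hℓ'
    ((mul_le_mul_iff_right₀ (by positivity)).1 h)
  rw [← rhatAdv_comp_perm σ (ℓ := ℓ')]
  exact rhatAdv_mono_of_le hU (fun i => (hℓ' (σ i)).elim (·.le.trans zero_le_one) (·.le)) hσ

lemma rhatAdv_lt_of_rhat_lt (hU : (UfEmp N f δ).Nonempty) (hℓ : ∀ i, ℓ i = 0 ∨ ℓ i = 1)
    (hℓ' : ∀ i, ℓ' i = 0 ∨ ℓ' i = 1) (h : Rhat N ℓ < Rhat N ℓ') (h1 : RhatAdv N f δ ℓ < 1) :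
    RhatAdv N f δ ℓ < RhatAdv N f δ ℓ' := by
  have hN : (1 : ℝ) ≤ N := by exact_mod_cast pos_of_ufEmp_nonempty hU
  have hsum := (mul_lt_mul_iff_right₀ (by positivity)).1 h
  obtain ⟨σ, hσ⟩ := exists_perm_le_comp_of_sum_le hℓ hℓ' hsum.le
  rw [← Equiv.sum_comp σ ℓ'] at hsum
  obtain ⟨j, -, hj⟩ := exists_lt_of_sum_lt hsum
  have hj0 : ℓ j = 0 := by rcases hℓ j with h | h <;> rcases hℓ' (σ j) with h' | h' <;> linarith
  have hj1 : ℓ' (σ j) = 1 := by rcases hℓ' (σ j) with h' | h' <;> linarith [hσ j]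
  have hgain : (1 - 1 / N) * RhatAdv N f δ ℓ + 1 / N ≤ RhatAdv N f δ ℓ' := by
    rw [← rhatAdv_comp_perm σ (ℓ := ℓ'), rhatAdv_eq_sSup_image (ℓ := ℓ)]
    refine mul_csSup_add_le (hU.image _) (sub_nonneg.2 ((div_le_one (by positivity)).2 hN)) ?_
    rintro _ ⟨r, hr, rfl⟩
    exact rhat_mul_add_le_rhatAdv hr hℓ
      (fun i => (hℓ' (σ i)).elim (·.le.trans zero_le_one) (·.le)) hσ hj0 hj1
  have : 0 < 1 / (N : ℝ) * (1 - RhatAdv N f δ ℓ) := mul_pos (by positivity) (by linarith)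
  linarith

end UncertaintySet

theorem stmt1_general (f : ℝ → ℝ)
    (hf1 : f 1 = 0) (δ : ℝ) (hδ : 0 < δ) (N : ℕ) (hN : 1 ≤ N)
    (ℓ ℓ' : Fin N → ℝ) (hℓ : ∀ i, ℓ i = 0 ∨ ℓ i = 1) (hℓ' : ∀ i, ℓ' i = 0 ∨ ℓ' i = 1) :
    (RhatAdv N f δ ℓ < 1 → (RhatAdv N f δ ℓ < RhatAdv N f δ ℓ' ↔ Rhat N ℓ < Rhat N ℓ')) ∧
    (RhatAdv N f δ ℓ = 1 → Rhat N ℓ ≤ Rhat N ℓ' → RhatAdv N f δ ℓ' = 1) := by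
  have hU := ufEmp_nonempty hN hf1 hδ.le
  refine ⟨fun h1 => ⟨fun h => ?_, fun h => rhatAdv_lt_of_rhat_lt hU hℓ hℓ' h h1⟩, fun h1 h => ?_⟩
  · by_contra! h'
    exact (rhatAdv_mono_of_rhat_le hU hℓ' hℓ h').not_gt h
  · have hℓ'_le : ∀ i, ℓ' i ≤ 1 := fun i => (hℓ' i).elim (·.le.trans zero_le_one) (·.le)
    exact le_antisymm (rhatAdv_le_one hℓ'_le) (h1 ▸ rhatAdv_mono_of_rhat_le hU hℓ hℓ' h)

/-- Empirical version of Theorem 1: with 0-1 losses, the adversarial empirical risk is a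
monotonic function of the empirical risk. -/
theorem stmt1 (f : ℝ → ℝ) (hconv : ConvexOn ℝ Set.univ f) (hdiff : Differentiable ℝ f)
    (hf1 : f 1 = 0) (δ : ℝ) (hδ : 0 < δ) (N : ℕ) (hN : 1 ≤ N)
    (ℓ ℓ' : Fin N → ℝ) (hℓ : ∀ i, ℓ i = 0 ∨ ℓ i = 1) (hℓ' : ∀ i, ℓ' i = 0 ∨ ℓ' i = 1) :
    (RhatAdv N f δ ℓ < 1 → (RhatAdv N f δ ℓ < RhatAdv N f δ ℓ' ↔ Rhat N ℓ < Rhat N ℓ')) ∧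
    (RhatAdv N f δ ℓ = 1 → Rhat N ℓ ≤ Rhat N ℓ' → RhatAdv N f δ ℓ' = 1) :=
  stmt1_general f hf1 δ hδ N hN ℓ ℓ' hℓ hℓ'
end

section
/- Let μ be a probability measure on a measurable space Ω, let f : ℝ → ℝ be convex with f(1) = 0, and let δ > 0. For any measurable set A ⊆ Ω with 0 < μ(A) < 1, the adversarial risk reduces to a two-variable optimization: R_adv(A) = sup { p₁·r₁ : r₀ ≥ 0, r₁ ≥ 0, (1−p₁) f(r₀) + p₁ f(r₁) ≤ δ, (1−p₁) r₀ + p₁ r₁ = 1 }, where p₁ = μ(A). -/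
open MeasureTheory

/-! Replacing a density ratio `r` by its averages `r₀` on `Aᶜ` and `r₁` on `A` keeps `∫ r dμ` and
`∫_A r dμ`, and by Jensen's inequality on each piece it can only decrease `∫ f(r) dμ`. The
resulting two-valued function is again in the uncertainty set, so the supremum may be taken over
pairs `(r₀, r₁)` only. -/

open Set

section

variable {Ω : Type*} [MeasurableSpace Ω] {μ : Measure Ω}

theorem ConvexOn.measureReal_mul_map_setAverage_le [IsFiniteMeasure μ] {t : Set ℝ} {g : ℝ → ℝ}
    (hg : ConvexOn ℝ t g) (hgc : ContinuousOn g t) (htc : IsClosed t) {r : Ω → ℝ} {s : Set Ω}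
    (hrt : ∀ᵐ ω ∂μ.restrict s, r ω ∈ t) (hr : IntegrableOn r s μ)
    (hgr : IntegrableOn (g ∘ r) s μ) :
    μ.real s * g (⨍ ω in s, r ω ∂μ) ≤ ∫ ω in s, g (r ω) ∂μ := by
  rcases eq_or_ne (μ s) 0 with hs | hs
  · simp [Measure.restrict_eq_zero.2 hs, measureReal_def, hs]
  calc μ.real s * g (⨍ ω in s, r ω ∂μ) ≤ μ.real s * ⨍ ω in s, g (r ω) ∂μ :=
        mul_le_mul_of_nonneg_left
          (hg.map_set_average_le hgc htc hs (measure_ne_top _ _) hrt hr hgr) measureReal_nonneg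
    _ = ∫ ω in s, g (r ω) ∂μ := measure_smul_setAverage _ (measure_ne_top _ _)

theorem setIntegral_piecewise_const {A : Set Ω} [DecidablePred (· ∈ A)] (hA : MeasurableSet A)
    (a b : ℝ) :
    ∫ ω in A, A.piecewise (fun _ => b) (fun _ => a) ω ∂μ = μ.real A * b := by
  rw [setIntegral_congr_fun hA (piecewise_eqOn A _ _), setIntegral_const, smul_eq_mul]

variable [IsProbabilityMeasure μ] {A : Set Ω}

theorem integral_piecewise_const [DecidablePred (· ∈ A)] (hA : MeasurableSet A) (a b : ℝ) :
    ∫ ω, A.piecewise (fun _ => b) (fun _ => a) ω ∂μ = (1 - μ.real A) * a + μ.real A * b := by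
  rw [integral_piecewise hA (integrableOn_const (measure_ne_top _ _))
      (integrableOn_const (measure_ne_top _ _)), setIntegral_const, setIntegral_const,
    probReal_compl_eq_one_sub hA, smul_eq_mul, smul_eq_mul]
  ring

theorem piecewise_const_mem_Uf_s2 [DecidablePred (· ∈ A)] (hA : MeasurableSet A) {f : ℝ → ℝ}
    {δ r₀ r₁ : ℝ} (h₀ : 0 ≤ r₀) (h₁ : 0 ≤ r₁)
    (hfδ : (1 - μ.real A) * f r₀ + μ.real A * f r₁ ≤ δ)
    (hsum : (1 - μ.real A) * r₀ + μ.real A * r₁ = 1) :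
    A.piecewise (fun _ => r₁) (fun _ => r₀) ∈ Uf μ f δ := by
  have hf : (fun ω => f (A.piecewise (fun _ => r₁) (fun _ => r₀) ω)) =
      A.piecewise (fun _ => f r₁) (fun _ => f r₀) := by
    ext ω
    by_cases hω : ω ∈ A <;> simp [hω]
  have hint : ∀ a b : ℝ, Integrable (A.piecewise (fun _ => b) (fun _ => a)) μ := fun a b =>
    Integrable.piecewise hA (integrable_const b).integrableOn (integrable_const a).integrableOn
  refine ⟨measurable_const.piecewise hA measurable_const, fun ω => ?_, hf ▸ hint _ _, hint _ _,
    ?_, ?_⟩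
  · by_cases hω : ω ∈ A <;> simp [hω, h₀, h₁]
  · rwa [hf, integral_piecewise_const hA]
  · rwa [integral_piecewise_const hA]

theorem exists_twoPoint_of_mem_Uf {f : ℝ → ℝ} (hf : ConvexOn ℝ univ f) {δ : ℝ}
    (hA : MeasurableSet A) {r : Ω → ℝ} (hr : r ∈ Uf μ f δ) :
    ∃ r₀ r₁ : ℝ, 0 ≤ r₀ ∧ 0 ≤ r₁ ∧
      (1 - μ.real A) * f r₀ + μ.real A * f r₁ ≤ δ ∧
      (1 - μ.real A) * r₀ + μ.real A * r₁ = 1 ∧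
      ∫ ω in A, r ω ∂μ = μ.real A * r₁ := by
  obtain ⟨-, hr0, hfi, hri, hfδ, hr1⟩ := hr
  have jensen : ∀ s, μ.real s * f (⨍ ω in s, r ω ∂μ) ≤ ∫ ω in s, f (r ω) ∂μ := fun s =>
    hf.measureReal_mul_map_setAverage_le (hf.continuousOn isOpen_univ) isClosed_univ
      (by simp) hri.integrableOn hfi.integrableOn
  have hmean : ∀ s, μ.real s * ⨍ ω in s, r ω ∂μ = ∫ ω in s, r ω ∂μ := fun s =>
    measure_smul_setAverage _ (measure_ne_top _ _)
  refine ⟨⨍ ω in Aᶜ, r ω ∂μ, ⨍ ω in A, r ω ∂μ, integral_nonneg hr0, integral_nonneg hr0,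
    ?_, ?_, (hmean A).symm⟩
  · have hsplit := integral_add_compl hA hfi
    have hjA := jensen A
    have hjAc := jensen Aᶜ
    rw [probReal_compl_eq_one_sub hA] at hjAc
    linarith
  · rw [← probReal_compl_eq_one_sub hA, hmean, hmean, add_comm, integral_add_compl hA hri, hr1]

end

theorem stmt2_general {Ω : Type*} [MeasurableSpace Ω] (μ : Measure Ω) [IsProbabilityMeasure μ]
    (f : ℝ → ℝ) (hconv : ConvexOn ℝ Set.univ f)
    (δ : ℝ) (A : Set Ω) (hA : MeasurableSet A) :
    Radv μ f δ A =
      sSup {x | ∃ r₀ r₁ : ℝ, 0 ≤ r₀ ∧ 0 ≤ r₁ ∧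
        (1 - (μ A).toReal) * f r₀ + (μ A).toReal * f r₁ ≤ δ ∧
        (1 - (μ A).toReal) * r₀ + (μ A).toReal * r₁ = 1 ∧
        x = (μ A).toReal * r₁} := by
  classical
  rw [Radv]
  congr 1
  ext x
  constructor
  · rintro ⟨r, hr, rfl⟩
    exact exists_twoPoint_of_mem_Uf hconv hA hr
  · rintro ⟨r₀, r₁, h₀, h₁, hfδ, hsum, rfl⟩
    exact ⟨_, piecewise_const_mem_Uf_s2 hA h₀ h₁ hfδ hsum,
      (setIntegral_piecewise_const hA r₀ r₁).symm⟩

/-- The adversarial risk with the 0-1 loss reduces to a two-variable optimization over the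
weights `r₀` (on the correctly classified part) and `r₁` (on the error set `A`),
with `p₁ = μ A`. -/
theorem stmt2 {Ω : Type*} [MeasurableSpace Ω] (μ : Measure Ω) [IsProbabilityMeasure μ]
    (f : ℝ → ℝ) (hconv : ConvexOn ℝ Set.univ f) (hf1 : f 1 = 0)
    (δ : ℝ) (hδ : 0 < δ) (A : Set Ω) (hA : MeasurableSet A)
    (h0 : 0 < μ A) (h1 : μ A < 1) :
    Radv μ f δ A =
      sSup {x | ∃ r₀ r₁ : ℝ, 0 ≤ r₀ ∧ 0 ≤ r₁ ∧
        (1 - (μ A).toReal) * f r₀ + (μ A).toReal * f r₁ ≤ δ ∧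
        (1 - (μ A).toReal) * r₀ + (μ A).toReal * r₁ = 1 ∧
        x = (μ A).toReal * r₁} :=
  stmt2_general μ f hconv δ A hA
end

section
/- Let f : ℝ → ℝ be convex and differentiable with f(1) = 0, and let δ > 0. For p₁ ∈ (0,1] define V(p₁) = sup { p₁·r₁ : r₀ ≥ 0, r₁ ≥ 0, (1−p₁) f(r₀) + p₁ f(r₁) ≤ δ, (1−p₁) r₀ + p₁ r₁ = 1 }. Then V(p₁) ≤ 1 for all p₁ ∈ (0,1], and for any 0 < p₁ < p₁' ≤ 1: (i) if V(p₁) < 1 then V(p₁) < V(p₁'); (ii) if V(p₁) = 1 then V(p₁') = 1. In particular V is non-decreasing on (0,1] and strictly increasing on the region where it is below 1. -/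
/-!
Given a feasible pair `(r₀, r₁)` at `p`, keep `r₀` and move to `p' > p`, replacing `r₁` by
`((p' - p) r₀ + p r₁) / p'`. This keeps total mass `1`, and by convexity of `f` it does not
increase the divergence, while the risk grows by `(p' - p) r₀ = (p' - p)(1 - x)/(1 - p)`.
Taking suprema gives `V(p) + (p' - p)/(1 - p) · (1 - V(p)) ≤ V(p')`, from which all claims follow.
-/

/-- `Vrisk f δ p₁` is the worst-case reweighted 0-1 risk when a fraction `p₁` of the mass is
misclassified, with weights `(r₀, r₁)` on the correctly and incorrectly classified parts
constrained by an `f`-divergence budget `δ`. -/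
noncomputable def Vrisk (f : ℝ → ℝ) (δ p₁ : ℝ) : ℝ :=
  sSup {x | ∃ r₀ r₁ : ℝ, 0 ≤ r₀ ∧ 0 ≤ r₁ ∧
    (1 - p₁) * f r₀ + p₁ * f r₁ ≤ δ ∧ (1 - p₁) * r₀ + p₁ * r₁ = 1 ∧ x = p₁ * r₁}

-- The feasible risks; `Vrisk f δ p` is definitionally `sSup (vriskSet f δ p)`.
def vriskSet (f : ℝ → ℝ) (δ p : ℝ) : Set ℝ :=
  {x | ∃ r₀ r₁ : ℝ, 0 ≤ r₀ ∧ 0 ≤ r₁ ∧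
    (1 - p) * f r₀ + p * f r₁ ≤ δ ∧ (1 - p) * r₀ + p * r₁ = 1 ∧ x = p * r₁}

section

variable {f : ℝ → ℝ} {δ p p' x : ℝ}

theorem le_one_of_mem_vriskSet (hp : p ≤ 1) (hx : x ∈ vriskSet f δ p) : x ≤ 1 := by
  obtain ⟨r₀, r₁, h₀, -, -, hsum, rfl⟩ := hx
  nlinarith [mul_nonneg (sub_nonneg.2 hp) h₀]

theorem bddAbove_vriskSet (hp : p ≤ 1) : BddAbove (vriskSet f δ p) :=
  ⟨1, fun _ hx => le_one_of_mem_vriskSet hp hx⟩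

theorem self_mem_vriskSet (hf1 : f 1 = 0) (hδ : 0 ≤ δ) : p ∈ vriskSet f δ p :=
  ⟨1, 1, zero_le_one, zero_le_one, by simpa [hf1] using hδ, by ring, by ring⟩

theorem Vrisk_le_one (hf1 : f 1 = 0) (hδ : 0 ≤ δ) (hp : p ≤ 1) : Vrisk f δ p ≤ 1 :=
  csSup_le ⟨p, self_mem_vriskSet hf1 hδ⟩ fun _ hx => le_one_of_mem_vriskSet hp hx

theorem add_mul_sub_mem_vriskSet (hconv : ConvexOn ℝ (Set.Ici 0) f) (hp : 0 < p)
    (hpp' : p ≤ p') (hp1 : p < 1) (hx : x ∈ vriskSet f δ p) :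
    x + (p' - p) / (1 - p) * (1 - x) ∈ vriskSet f δ p' := by
  obtain ⟨r₀, r₁, h₀, h₁, hdiv, hsum, rfl⟩ := hx
  have hp' : 0 < p' := hp.trans_le hpp'
  set r₁' := (p' - p) / p' * r₀ + p / p' * r₁
  have hconv_le : f r₁' ≤ (p' - p) / p' * f r₀ + p / p' * f r₁ :=
    hconv.2 h₀ h₁ (div_nonneg (sub_nonneg.2 hpp') hp'.le) (div_nonneg hp.le hp'.le)
      (by field_simp; ring)
  have hmass : p' * r₁' = (p' - p) * r₀ + p * r₁ := by
    simp only [r₁']; field_simp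
  have hdiv_le : p' * f r₁' ≤ (p' - p) * f r₀ + p * f r₁ := by
    calc p' * f r₁' ≤ p' * ((p' - p) / p' * f r₀ + p / p' * f r₁) := by gcongr
      _ = (p' - p) * f r₀ + p * f r₁ := by field_simp
  refine ⟨r₀, r₁', h₀, ?_, by linarith, by linarith, ?_⟩
  · exact add_nonneg (mul_nonneg (div_nonneg (sub_nonneg.2 hpp') hp'.le) h₀)
      (mul_nonneg (div_nonneg hp.le hp'.le) h₁)
  · have h1p : 1 - p ≠ 0 := by linarith
    rw [hmass, show 1 - p * r₁ = (1 - p) * r₀ by linarith]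
    field_simp
    ring

theorem Vrisk_add_mul_sub_le (hconv : ConvexOn ℝ (Set.Ici 0) f) (hf1 : f 1 = 0) (hδ : 0 ≤ δ)
    (hp : 0 < p) (hpp' : p < p') (hp'1 : p' ≤ 1) :
    Vrisk f δ p + (p' - p) / (1 - p) * (1 - Vrisk f δ p) ≤ Vrisk f δ p' := by
  rw [← le_sub_iff_add_le]
  refine csSup_le ⟨p, self_mem_vriskSet hf1 hδ⟩ fun x hx => ?_
  have hxV : x ≤ Vrisk f δ p := le_csSup (bddAbove_vriskSet (by linarith)) hx
  have hV' : x + (p' - p) / (1 - p) * (1 - x) ≤ Vrisk f δ p' :=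
    le_csSup (bddAbove_vriskSet hp'1)
      (add_mul_sub_mem_vriskSet hconv hp hpp'.le (by linarith) hx)
  have hc : 0 ≤ (p' - p) / (1 - p) := div_nonneg (by linarith) (by linarith)
  have : (p' - p) / (1 - p) * (1 - Vrisk f δ p) ≤ (p' - p) / (1 - p) * (1 - x) := by gcongr
  linarith

end

theorem stmt3_general (f : ℝ → ℝ) (hconv : ConvexOn ℝ Set.univ f)
    (hf1 : f 1 = 0) (δ : ℝ) (hδ : 0 < δ) :
    (∀ p₁ ∈ Set.Ioc (0 : ℝ) 1, Vrisk f δ p₁ ≤ 1) ∧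
    (∀ p₁ p₁' : ℝ, 0 < p₁ → p₁ < p₁' → p₁' ≤ 1 →
      (Vrisk f δ p₁ < 1 → Vrisk f δ p₁ < Vrisk f δ p₁') ∧
      (Vrisk f δ p₁ = 1 → Vrisk f δ p₁' = 1)) ∧
    MonotoneOn (Vrisk f δ) (Set.Ioc (0 : ℝ) 1) := by
  have hconv' := hconv.subset (Set.subset_univ _) (convex_Ici 0)
  have hle_one : ∀ {p}, p ≤ 1 → Vrisk f δ p ≤ 1 := Vrisk_le_one hf1 hδ.le
  have hgain : ∀ {p p'}, 0 < p → p < p' → p' ≤ 1 →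
      0 ≤ (p' - p) / (1 - p) * (1 - Vrisk f δ p) ∧
      Vrisk f δ p + (p' - p) / (1 - p) * (1 - Vrisk f δ p) ≤ Vrisk f δ p' :=
    fun hp hpp' hp'1 => ⟨mul_nonneg (div_nonneg (by linarith) (by linarith))
      (sub_nonneg.2 (hle_one (by linarith))), Vrisk_add_mul_sub_le hconv' hf1 hδ.le hp hpp' hp'1⟩
  refine ⟨fun p hp => hle_one hp.2, fun p p' hp hpp' hp'1 => ⟨fun hlt => ?_, fun heq => ?_⟩, ?_⟩
  · have hc : 0 < (p' - p) / (1 - p) := div_pos (by linarith) (by linarith)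
    nlinarith [(hgain hp hpp' hp'1).2]
  · have := (hgain hp hpp' hp'1).2
    rw [heq, sub_self, mul_zero, add_zero] at this
    exact le_antisymm (hle_one hp'1) this
  · intro p hp q hq hpq
    rcases hpq.eq_or_lt with rfl | hlt
    · exact le_rfl
    · obtain ⟨hnn, hle⟩ := hgain hp.1 hlt hq.2
      linarith

/-- `V(p₁) ≤ 1` on `(0,1]`; `V` is strictly increasing where it is below `1`, constantly `1`
once it reaches `1`, and in particular non-decreasing on `(0,1]`. -/
theorem stmt3 (f : ℝ → ℝ) (hconv : ConvexOn ℝ Set.univ f) (hdiff : Differentiable ℝ f)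
    (hf1 : f 1 = 0) (δ : ℝ) (hδ : 0 < δ) :
    (∀ p₁ ∈ Set.Ioc (0 : ℝ) 1, Vrisk f δ p₁ ≤ 1) ∧
    (∀ p₁ p₁' : ℝ, 0 < p₁ → p₁ < p₁' → p₁' ≤ 1 →
      (Vrisk f δ p₁ < 1 → Vrisk f δ p₁ < Vrisk f δ p₁') ∧
      (Vrisk f δ p₁ = 1 → Vrisk f δ p₁' = 1)) ∧
    MonotoneOn (Vrisk f δ) (Set.Ioc (0 : ℝ) 1) :=
  stmt3_general f hconv hf1 δ hδ
end

section
/- Let φ : ℝ → [0,∞) be convex and differentiable, let h : [0,∞) → [0,∞) be non-decreasing, and let ψ : ℝ → ℝ be differentiable with ψ'(t) = h(φ(t))·φ'(t) for all t ∈ ℝ. Then ψ is convex. If moreover φ'(0) < 0 and h(φ(0)) > 0, then ψ'(0) < 0. (By Bartlett–Jordan–McAuliffe's characterization that a convex margin loss t ↦ φ(t) is classification-calibrated if and only if φ'(0) < 0, this shows that the steeper loss of a convex classification-calibrated margin loss is again convex and classification-calibrated.) -/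
/-- A steeper loss of a convex, nonnegative, differentiable margin loss `φ`
(`ψ' = h(φ)·φ'` with `h` non-decreasing and non-negative on `[0,∞)`) is again convex;
and if `φ'(0) < 0` (classification calibration for convex margin losses) and `h(φ(0)) > 0`,
then also `ψ'(0) < 0`, i.e. `ψ` is classification-calibrated. -/
theorem stmt5 (φ h ψ : ℝ → ℝ)
    (hφ0 : ∀ t, 0 ≤ φ t) (hφconv : ConvexOn ℝ Set.univ φ)
    (hφdiff : Differentiable ℝ φ)
    (hmono : MonotoneOn h (Set.Ici 0)) (hnonneg : ∀ u ∈ Set.Ici (0 : ℝ), 0 ≤ h u)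
    (hψdiff : Differentiable ℝ ψ)
    (hψ' : ∀ t, deriv ψ t = h (φ t) * deriv φ t) :
    ConvexOn ℝ Set.univ ψ ∧
    (deriv φ 0 < 0 → 0 < h (φ 0) → deriv ψ 0 < 0) := by
  have hd : Monotone (deriv φ) := by
    have := hφconv.monotoneOn_deriv (fun x _ => hφdiff.differentiableAt)
    exact monotoneOn_univ.mp this
  constructor
  · refine Monotone.convexOn_univ_of_deriv hψdiff ?_
    intro x y hxy
    rw [hψ' x, hψ' y]
    rcases eq_or_lt_of_le hxy with rfl | hxy
    · exact le_refl _
    have hslope1 : deriv φ x ≤ slope φ x y :=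
      hφconv.deriv_le_slope (Set.mem_univ x) (Set.mem_univ y) hxy hφdiff.differentiableAt
    have hslope2 : slope φ x y ≤ deriv φ y :=
      hφconv.slope_le_deriv (Set.mem_univ x) (Set.mem_univ y) hxy hφdiff.differentiableAt
    have hdxy : deriv φ x ≤ deriv φ y := hd hxy.le
    have hypos : (0:ℝ) < y - x := by linarith
    rcases le_or_gt 0 (deriv φ x) with hx0 | hx0
    · -- φ x ≤ φ y
      have hφxy : φ x ≤ φ y := by
        have : 0 ≤ slope φ x y := le_trans hx0 hslope1
        rw [slope_def_field, div_nonneg_iff] at this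
        rcases this with ⟨h1, _⟩ | ⟨_, h2⟩
        · linarith
        · linarith
      have hh : h (φ x) ≤ h (φ y) := hmono (hφ0 x) (hφ0 y) hφxy
      have hhy : 0 ≤ h (φ y) := hnonneg _ (hφ0 y)
      calc h (φ x) * deriv φ x ≤ h (φ y) * deriv φ x := by nlinarith
        _ ≤ h (φ y) * deriv φ y := by nlinarith
    · rcases le_or_gt (deriv φ y) 0 with hy0 | hy0
      · -- φ y ≤ φ x
        have hφxy : φ y ≤ φ x := by
          have : slope φ x y ≤ 0 := le_trans hslope2 hy0
          rw [slope_def_field, div_nonpos_iff] at this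
          rcases this with ⟨_, h2⟩ | ⟨h1, _⟩
          · linarith
          · linarith
        have hh : h (φ y) ≤ h (φ x) := hmono (hφ0 y) (hφ0 x) hφxy
        have hhy : 0 ≤ h (φ y) := hnonneg _ (hφ0 y)
        calc h (φ x) * deriv φ x ≤ h (φ y) * deriv φ x := by nlinarith
          _ ≤ h (φ y) * deriv φ y := by nlinarith
      · have hhx : 0 ≤ h (φ x) := hnonneg _ (hφ0 x)
        have hhy : 0 ≤ h (φ y) := hnonneg _ (hφ0 y)
        nlinarith
  · intro h1 h2
    rw [hψ' 0]
    exact mul_neg_of_pos_of_neg h2 h1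
end

section
/- Let f : ℝ → ℝ be convex with f(1) = 0, let δ > 0, N ≥ 1, and let ℓ ∈ ℝ^N with ℓ_i ≥ 0 for all i. Then: (i) every maximizer r of ∑_{i=1}^N r_i ℓ_i over Û_f satisfies r_j ≤ r_k whenever ℓ_j < ℓ_k; (ii) there exists a maximizer r* of ∑_{i=1}^N r_i ℓ_i over Û_f such that additionally r*_j = r*_k whenever ℓ_j = ℓ_k; consequently there exists a non-decreasing, non-negative function h : [0,∞) → [0,∞) with r*_i = h(ℓ_i) for all i. (A maximizer exists because Û_f is a nonempty compact subset of ℝ^N: it contains the all-ones vector and is contained in [0, N]^N.) -/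
open Finset

section Exchange

variable {ι : Type*} [Fintype ι] [DecidableEq ι]

theorem sum_comp_swap_mul (r ℓ : ι → ℝ) {j k : ι} (hjk : j ≠ k) :
    ∑ i, r (Equiv.swap j k i) * ℓ i = ∑ i, r i * ℓ i + (r j - r k) * (ℓ k - ℓ j) := by
  have hdiff : ∑ i, (r (Equiv.swap j k i) - r i) * ℓ i = (r j - r k) * (ℓ k - ℓ j) := by
    rw [Fintype.sum_eq_add j k hjk fun i hi => by rw [Equiv.swap_apply_of_ne_of_ne hi.1 hi.2,
      sub_self, zero_mul]]
    simp only [Equiv.swap_apply_left, Equiv.swap_apply_right]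
    ring
  rw [← hdiff, ← sum_add_distrib]
  exact sum_congr rfl fun i _ => by ring

theorem apply_le_apply_of_forall_sum_mul_le {S : Set (ι → ℝ)}
    (hS : ∀ r ∈ S, ∀ j k, r ∘ Equiv.swap j k ∈ S) {ℓ r : ι → ℝ} (hr : r ∈ S)
    (hmax : ∀ r' ∈ S, ∑ i, r' i * ℓ i ≤ ∑ i, r i * ℓ i) {j k : ι} (hℓ : ℓ j < ℓ k) :
    r j ≤ r k := by
  by_contra! hr_lt
  have hswap := hmax _ (hS r hr j k)
  rw [Function.comp_def, sum_comp_swap_mul r ℓ (ne_of_apply_ne ℓ hℓ.ne)] at hswap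
  linarith [mul_pos (sub_pos.mpr hr_lt) (sub_pos.mpr hℓ)]

end Exchange

section FiberAverage

variable {ι α : Type*} [Fintype ι] [DecidableEq α] (ℓ : ι → α)

noncomputable def fiberAverage (r : ι → ℝ) (i : ι) : ℝ :=
  (∑ j with ℓ j = ℓ i, r j) / #{j | ℓ j = ℓ i}

theorem card_fiber_pos (i : ι) : (0 : ℝ) < #{j | ℓ j = ℓ i} :=
  Nat.cast_pos.mpr (card_pos.mpr ⟨i, by simp⟩)

theorem fiberAverage_eq_of_eq (r : ι → ℝ) {j k : ι} (h : ℓ j = ℓ k) :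
    fiberAverage ℓ r j = fiberAverage ℓ r k := by
  simp only [fiberAverage, h]

theorem sum_fiberAverage (r : ι → ℝ) : ∑ i, fiberAverage ℓ r i = ∑ i, r i := by
  have hmaps : ∀ i ∈ (univ : Finset ι), ℓ i ∈ univ.image ℓ := fun i _ =>
    mem_image_of_mem ℓ (mem_univ i)
  rw [← sum_fiberwise_of_maps_to hmaps, ← sum_fiberwise_of_maps_to hmaps]
  refine sum_congr rfl fun a ha => ?_
  obtain ⟨i₀, -, rfl⟩ := mem_image.mp ha
  rw [sum_congr rfl fun i hi => fiberAverage_eq_of_eq ℓ r (mem_filter.mp hi).2, sum_const,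
    nsmul_eq_mul, fiberAverage, mul_div_cancel₀ _ (card_fiber_pos ℓ i₀).ne']

theorem fiberAverage_mul (r : ι → ℝ) (g : α → ℝ) (i : ι) :
    fiberAverage ℓ r i * g (ℓ i) = fiberAverage ℓ (fun j => r j * g (ℓ j)) i := by
  rw [fiberAverage, fiberAverage, div_mul_eq_mul_div, sum_mul]
  congr 1
  exact sum_congr rfl fun j hj => by rw [(mem_filter.mp hj).2]

theorem sum_fiberAverage_mul (r : ι → ℝ) (g : α → ℝ) :
    ∑ i, fiberAverage ℓ r i * g (ℓ i) = ∑ i, r i * g (ℓ i) := by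
  simp only [fiberAverage_mul, sum_fiberAverage]

theorem fiberAverage_nonneg {r : ι → ℝ} (hr : ∀ i, 0 ≤ r i) (i : ι) : 0 ≤ fiberAverage ℓ r i :=
  div_nonneg (sum_nonneg fun j _ => hr j) (card_fiber_pos ℓ i).le

theorem ConvexOn.map_fiberAverage_le {s : Set ℝ} {f : ℝ → ℝ} (hf : ConvexOn ℝ s f)
    {r : ι → ℝ} (hr : ∀ i, r i ∈ s) (i : ι) :
    f (fiberAverage ℓ r i) ≤ fiberAverage ℓ (fun j => f (r j)) i := by
  have hweights : ∑ _j with ℓ _j = ℓ i, (#{j | ℓ j = ℓ i} : ℝ)⁻¹ = 1 := by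
    rw [sum_const, nsmul_eq_mul, mul_inv_cancel₀ (card_fiber_pos ℓ i).ne']
  simp only [fiberAverage, div_eq_inv_mul, mul_sum]
  exact hf.map_sum_le (fun _ _ => by positivity) hweights fun j _ => hr j

end FiberAverage

section UncertaintySet

variable {N : ℕ} {f : ℝ → ℝ} {δ : ℝ}

theorem comp_perm_mem_UfEmp (σ : Equiv.Perm (Fin N)) {r : Fin N → ℝ} (hr : r ∈ UfEmp N f δ) :
    r ∘ σ ∈ UfEmp N f δ := by
  obtain ⟨hf, hsum, hnonneg⟩ := hr
  refine ⟨?_, ?_, fun i => hnonneg (σ i)⟩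
  · simpa only [Function.comp_apply, Equiv.sum_comp σ fun i => f (r i)] using hf
  · simpa only [Function.comp_apply, Equiv.sum_comp σ r] using hsum

theorem fiberAverage_mem_UfEmp {α : Type*} [DecidableEq α] (ℓ : Fin N → α)
    (hf : ConvexOn ℝ Set.univ f) {r : Fin N → ℝ} (hr : r ∈ UfEmp N f δ) :
    fiberAverage ℓ r ∈ UfEmp N f δ := by
  obtain ⟨hfδ, hsum, hnonneg⟩ := hr
  refine ⟨?_, by rwa [sum_fiberAverage], fiberAverage_nonneg ℓ hnonneg⟩
  calc (1 / (N : ℝ)) * ∑ i, f (fiberAverage ℓ r i)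
      ≤ (1 / (N : ℝ)) * ∑ i, fiberAverage ℓ (fun j => f (r j)) i := by
        gcongr with i
        exact hf.map_fiberAverage_le ℓ (fun _ => Set.mem_univ _) i
    _ = (1 / (N : ℝ)) * ∑ i, f (r i) := by rw [sum_fiberAverage]
    _ ≤ δ := hfδ

theorem one_mem_UfEmp (hf1 : f 1 = 0) (hδ : 0 ≤ δ) (hN : 0 < N) :
    (fun _ => 1) ∈ UfEmp N f δ :=
  ⟨by simpa [hf1] using hδ, by simp [hN.ne'], fun _ => zero_le_one⟩

theorem UfEmp_subset_Icc : UfEmp N f δ ⊆ Set.Icc 0 fun _ => (N : ℝ) := by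
  rintro r ⟨-, hsum, hnonneg⟩
  refine ⟨hnonneg, fun i => ?_⟩
  have hN : (N : ℝ) ≠ 0 := by rintro h; simp [h] at hsum
  calc r i ≤ ∑ j, r j := single_le_sum (fun j _ => hnonneg j) (mem_univ i)
    _ = N := by field_simp at hsum; linarith

theorem isCompact_UfEmp (hf : Continuous f) : IsCompact (UfEmp N f δ) := by
  refine isCompact_Icc.of_isClosed_subset ?_ UfEmp_subset_Icc
  refine (isClosed_le (f := fun r : Fin N → ℝ => (1 / (N : ℝ)) * ∑ i, f (r i)) (by fun_prop)
    continuous_const).inter ((isClosed_eq (f := fun r : Fin N → ℝ => (1 / (N : ℝ)) * ∑ i, r i)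
    (by fun_prop) continuous_const).inter isClosed_Ici)

end UncertaintySet

theorem exists_monotone_nonneg_comp_eq {ι α : Type*} [Fintype ι] [Preorder α]
    {ℓ : ι → α} {q : ι → ℝ} (hq : ∀ i, 0 ≤ q i) (hmono : ∀ j k, ℓ j ≤ ℓ k → q j ≤ q k) :
    ∃ h : α → ℝ, Monotone h ∧ (∀ u, 0 ≤ h u) ∧ ∀ i, q i = h (ℓ i) := by
  classical
  -- `ℝ≥0` has a bottom element, so the supremum over an empty set of indices is `0`.
  let g : ι → NNReal := fun i => ⟨q i, hq i⟩
  let h : α → NNReal := fun u => sup {i | ℓ i ≤ u} g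
  refine ⟨fun u => h u, fun u v huv => ?_, fun u => (h u).2, fun i => ?_⟩
  · exact NNReal.coe_le_coe.mpr (sup_mono (monotone_filter_right _ fun _ _ hi => hi.trans huv))
  · have hi : i ∈ ({j | ℓ j ≤ ℓ i} : Finset ι) := mem_filter.mpr ⟨mem_univ i, le_rfl⟩
    refine congrArg NNReal.toReal (le_antisymm (le_sup (f := g) hi) (Finset.sup_le fun j hj => ?_))
    exact Subtype.mk_le_mk.mpr (hmono j i (mem_filter.mp hj).2)

theorem stmt7_general (f : ℝ → ℝ) (hconv : ConvexOn ℝ Set.univ f) (hf1 : f 1 = 0)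
    (δ : ℝ) (hδ : 0 < δ) (N : ℕ) (hN : 1 ≤ N)
    (ℓ : Fin N → ℝ) :
    (∀ r ∈ UfEmp N f δ,
      (∀ r' ∈ UfEmp N f δ, ∑ i, r' i * ℓ i ≤ ∑ i, r i * ℓ i) →
      ∀ j k, ℓ j < ℓ k → r j ≤ r k) ∧
    (∃ r ∈ UfEmp N f δ,
      (∀ r' ∈ UfEmp N f δ, ∑ i, r' i * ℓ i ≤ ∑ i, r i * ℓ i) ∧
      (∀ j k, ℓ j = ℓ k → r j = r k) ∧
      ∃ h : ℝ → ℝ, MonotoneOn h (Set.Ici 0) ∧ (∀ u ∈ Set.Ici (0 : ℝ), 0 ≤ h u) ∧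
        ∀ i, r i = h (ℓ i)) := by
  have hexchange : ∀ r ∈ UfEmp N f δ, (∀ r' ∈ UfEmp N f δ, ∑ i, r' i * ℓ i ≤ ∑ i, r i * ℓ i) →
      ∀ j k, ℓ j < ℓ k → r j ≤ r k := fun r hr hmax j k =>
    apply_le_apply_of_forall_sum_mul_le (fun r hr j k => comp_perm_mem_UfEmp _ hr) hr hmax
  have hcont : Continuous f := continuousOn_univ.mp (hconv.continuousOn isOpen_univ)
  obtain ⟨r, hr, hrmax⟩ := (isCompact_UfEmp hcont).exists_isMaxOn
    ⟨_, one_mem_UfEmp hf1 hδ.le hN⟩ (f := fun r => ∑ i, r i * ℓ i) (by fun_prop)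
  set q := fiberAverage ℓ r
  have hq : q ∈ UfEmp N f δ := fiberAverage_mem_UfEmp ℓ hconv hr
  have hqmax : ∀ r' ∈ UfEmp N f δ, ∑ i, r' i * ℓ i ≤ ∑ i, q i * ℓ i := fun r' hr' =>
    (sum_fiberAverage_mul ℓ r id).symm ▸ hrmax hr'
  have hqeq : ∀ j k, ℓ j = ℓ k → q j = q k := fun j k => fiberAverage_eq_of_eq ℓ r
  obtain ⟨h, hmono, hnonneg, hqh⟩ := exists_monotone_nonneg_comp_eq hq.2.2 fun j k hjk =>
    hjk.lt_or_eq.elim (hexchange q hq hqmax j k) fun h => (hqeq j k h).le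
  exact ⟨hexchange, q, hq, hqmax, hqeq, h, hmono.monotoneOn _, fun u _ => hnonneg u, hqh⟩

/-- (i) Every maximizer of the adversarially reweighted loss `∑ rᵢ ℓᵢ` over `Û_f` puts
weakly larger weight on data points with strictly larger losses; (ii) some maximizer in
addition puts equal weights on equal losses, and hence equals a non-decreasing,
non-negative function `h` of the losses. -/
theorem stmt7 (f : ℝ → ℝ) (hconv : ConvexOn ℝ Set.univ f) (hf1 : f 1 = 0)
    (δ : ℝ) (hδ : 0 < δ) (N : ℕ) (hN : 1 ≤ N)
    (ℓ : Fin N → ℝ) (hℓ : ∀ i, 0 ≤ ℓ i) :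
    (∀ r ∈ UfEmp N f δ,
      (∀ r' ∈ UfEmp N f δ, ∑ i, r' i * ℓ i ≤ ∑ i, r i * ℓ i) →
      ∀ j k, ℓ j < ℓ k → r j ≤ r k) ∧
    (∃ r ∈ UfEmp N f δ,
      (∀ r' ∈ UfEmp N f δ, ∑ i, r' i * ℓ i ≤ ∑ i, r i * ℓ i) ∧
      (∀ j k, ℓ j = ℓ k → r j = r k) ∧
      ∃ h : ℝ → ℝ, MonotoneOn h (Set.Ici 0) ∧ (∀ u ∈ Set.Ici (0 : ℝ), 0 ≤ h u) ∧
        ∀ i, r i = h (ℓ i)) :=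
  stmt7_general f hconv hf1 δ hδ N hN ℓ
end

section
/- Let S ≥ 1, let p_1, …, p_S > 0 with ∑_s p_s = 1, let R_1, …, R_S ∈ ℝ, and let δ > 0. Write R̄ = ∑_s p_s R_s and σ² = ∑_s p_s (R_s − R̄)². If σ² > 0, then sup { ∑_s p_s w_s R_s : w ∈ ℝ^S, ∑_s p_s (w_s − 1)² ≤ δ, ∑_s p_s w_s = 1 } = R̄ + √δ · √σ², and the supremum is attained at w*_s = 1 + √(δ/σ²)·(R_s − R̄). If σ² = 0, the supremum equals R̄. (This is the decomposition of the structural adversarial risk under the Pearson divergence into the ordinary risk plus √δ times the risk standard deviation across latent categories, with the nonnegativity constraint dropped.) -/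
/-- Decomposition of the structural adversarial risk under the Pearson divergence
(nonnegativity constraint dropped): the supremum of the reweighted risk equals the
ordinary risk `R̄` plus `√δ` times the risk standard deviation across latent categories,
attained at `w*ₛ = 1 + √(δ/σ²)(Rₛ − R̄)`; if the risk variance vanishes the supremum is `R̄`. -/
theorem stmt10 (S : ℕ) (hS : 1 ≤ S) (p R : Fin S → ℝ) (hp : ∀ s, 0 < p s)
    (hp1 : ∑ s, p s = 1) (δ : ℝ) (hδ : 0 < δ) :
    let Rb : ℝ := ∑ s, p s * R s
    let σ2 : ℝ := ∑ s, p s * (R s - Rb) ^ 2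
    let ws : Fin S → ℝ := fun s => 1 + Real.sqrt (δ / σ2) * (R s - Rb)
    let sup : ℝ := sSup {x | ∃ w : Fin S → ℝ,
      (∑ s, p s * (w s - 1) ^ 2 ≤ δ) ∧ (∑ s, p s * w s = 1) ∧ x = ∑ s, p s * w s * R s}
    (0 < σ2 →
      sup = Rb + Real.sqrt δ * Real.sqrt σ2 ∧
      (∑ s, p s * (ws s - 1) ^ 2 ≤ δ) ∧ (∑ s, p s * ws s = 1) ∧
      (∑ s, p s * ws s * R s = Rb + Real.sqrt δ * Real.sqrt σ2)) ∧
    (σ2 = 0 → sup = Rb) := by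
  intro Rb σ2 ws sup
  have hRbdef : Rb = ∑ s, p s * R s := rfl
  have hσ2def : σ2 = ∑ s, p s * (R s - Rb) ^ 2 := rfl
  have hσ2nn : 0 ≤ σ2 := Finset.sum_nonneg fun s _ => mul_nonneg (hp s).le (sq_nonneg _)
  -- centered sum is zero
  have hcent : ∑ s, p s * (R s - Rb) = 0 := by
    have : ∀ s ∈ Finset.univ, p s * (R s - Rb) = p s * R s - Rb * p s := by
      intro s _; ring
    rw [Finset.sum_congr rfl this, Finset.sum_sub_distrib, ← Finset.mul_sum, hp1, ← hRbdef]
    ring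
  -- ∑ p (R - Rb) R = σ2
  have hcentR : ∑ s, p s * (R s - Rb) * R s = σ2 := by
    have : ∀ s ∈ Finset.univ, p s * (R s - Rb) * R s
        = p s * (R s - Rb) ^ 2 + Rb * (p s * (R s - Rb)) := by
      intro s _; ring
    rw [Finset.sum_congr rfl this, Finset.sum_add_distrib, ← Finset.mul_sum, hcent, ← hσ2def]
    ring
  -- key identity for feasible w
  have hkey : ∀ w : Fin S → ℝ, (∑ s, p s * w s = 1) →
      ∑ s, p s * w s * R s = Rb + ∑ s, p s * (w s - 1) * (R s - Rb) := by
    intro w hw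
    have : ∀ s ∈ Finset.univ, p s * (w s - 1) * (R s - Rb)
        = p s * w s * R s - Rb * (p s * w s) - p s * R s + Rb * p s := by
      intro s _; ring
    rw [Finset.sum_congr rfl this]
    rw [Finset.sum_add_distrib, Finset.sum_sub_distrib, Finset.sum_sub_distrib,
      ← Finset.mul_sum, ← Finset.mul_sum, hw, hp1, ← hRbdef]
    ring
  -- upper bound for feasible w
  have hbound : ∀ x ∈ {x | ∃ w : Fin S → ℝ,
      (∑ s, p s * (w s - 1) ^ 2 ≤ δ) ∧ (∑ s, p s * w s = 1) ∧ x = ∑ s, p s * w s * R s},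
      x ≤ Rb + Real.sqrt δ * Real.sqrt σ2 := by
    rintro x ⟨w, hw1, hw2, rfl⟩
    rw [hkey w hw2]
    have hcs : ∑ s, p s * (w s - 1) * (R s - Rb)
        ≤ Real.sqrt (∑ s, p s * (w s - 1) ^ 2) * Real.sqrt σ2 := by
      have h := Real.sum_mul_le_sqrt_mul_sqrt Finset.univ
        (fun s => Real.sqrt (p s) * (w s - 1)) (fun s => Real.sqrt (p s) * (R s - Rb))
      have e1 : ∀ s ∈ Finset.univ,
          (Real.sqrt (p s) * (w s - 1)) * (Real.sqrt (p s) * (R s - Rb))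
          = p s * (w s - 1) * (R s - Rb) := by
        intro s _
        rw [mul_mul_mul_comm, Real.mul_self_sqrt (hp s).le]; ring
      have e2 : ∀ s ∈ Finset.univ,
          (Real.sqrt (p s) * (w s - 1)) ^ 2 = p s * (w s - 1) ^ 2 := by
        intro s _
        rw [mul_pow, Real.sq_sqrt (hp s).le]
      have e3 : ∀ s ∈ Finset.univ,
          (Real.sqrt (p s) * (R s - Rb)) ^ 2 = p s * (R s - Rb) ^ 2 := by
        intro s _
        rw [mul_pow, Real.sq_sqrt (hp s).le]
      rwa [Finset.sum_congr rfl e1, Finset.sum_congr rfl e2, Finset.sum_congr rfl e3] at h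
    have : Real.sqrt (∑ s, p s * (w s - 1) ^ 2) ≤ Real.sqrt δ :=
      Real.sqrt_le_sqrt hw1
    have := mul_le_mul_of_nonneg_right this (Real.sqrt_nonneg σ2)
    linarith
  -- the set is nonempty: w = 1
  have hmem1 : Rb ∈ {x | ∃ w : Fin S → ℝ,
      (∑ s, p s * (w s - 1) ^ 2 ≤ δ) ∧ (∑ s, p s * w s = 1) ∧ x = ∑ s, p s * w s * R s} := by
    refine ⟨fun _ => 1, ?_, ?_, ?_⟩
    · simp [hδ.le]
    · simpa using hp1
    · simp [hRbdef]
  have hbdd : BddAbove {x | ∃ w : Fin S → ℝ,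
      (∑ s, p s * (w s - 1) ^ 2 ≤ δ) ∧ (∑ s, p s * w s = 1) ∧ x = ∑ s, p s * w s * R s} :=
    ⟨Rb + Real.sqrt δ * Real.sqrt σ2, hbound⟩
  constructor
  · intro hσ2
    have hc2 : Real.sqrt (δ / σ2) ^ 2 = δ / σ2 := Real.sq_sqrt (by positivity)
    have hsum2 : ∑ s, p s * (ws s - 1) ^ 2 = δ := by
      have : ∀ s ∈ Finset.univ, p s * (ws s - 1) ^ 2
          = Real.sqrt (δ / σ2) ^ 2 * (p s * (R s - Rb) ^ 2) := by
        intro s _; simp only [ws]; ring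
      rw [Finset.sum_congr rfl this, ← Finset.mul_sum, ← hσ2def, hc2]
      field_simp
    have hsum1 : ∑ s, p s * ws s = 1 := by
      have : ∀ s ∈ Finset.univ, p s * ws s
          = p s + Real.sqrt (δ / σ2) * (p s * (R s - Rb)) := by
        intro s _; simp only [ws]; ring
      rw [Finset.sum_congr rfl this, Finset.sum_add_distrib, ← Finset.mul_sum, hcent, hp1]
      ring
    have hcσ2 : Real.sqrt (δ / σ2) * σ2 = Real.sqrt δ * Real.sqrt σ2 := by
      rw [Real.sqrt_div hδ.le, div_mul_eq_mul_div, mul_div_assoc, Real.div_sqrt]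
    have hval : ∑ s, p s * ws s * R s = Rb + Real.sqrt δ * Real.sqrt σ2 := by
      have : ∀ s ∈ Finset.univ, p s * ws s * R s
          = p s * R s + Real.sqrt (δ / σ2) * (p s * (R s - Rb) * R s) := by
        intro s _; simp only [ws]; ring
      rw [Finset.sum_congr rfl this, Finset.sum_add_distrib, ← Finset.mul_sum, hcentR,
        ← hRbdef, hcσ2]
    refine ⟨?_, hsum2.le, hsum1, hval⟩
    refine le_antisymm (csSup_le ⟨Rb, hmem1⟩ hbound) ?_
    exact le_csSup hbdd ⟨ws, hsum2.le, hsum1, hval.symm⟩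
  · intro hσ2
    have hReq : ∀ s, R s = Rb := by
      intro s
      have h0 : ∀ s ∈ Finset.univ, (0:ℝ) ≤ p s * (R s - Rb) ^ 2 := fun s _ => mul_nonneg (hp s).le (sq_nonneg _)
      have := (Finset.sum_eq_zero_iff_of_nonneg h0).mp hσ2 s (Finset.mem_univ s)
      have h2 : (R s - Rb) ^ 2 = 0 := by
        rcases mul_eq_zero.mp this with h | h
        · exact absurd h (hp s).ne'
        · exact h
      have := pow_eq_zero_iff (n := 2) (by norm_num) |>.mp h2
      linarith
    have hset : {x | ∃ w : Fin S → ℝ,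
        (∑ s, p s * (w s - 1) ^ 2 ≤ δ) ∧ (∑ s, p s * w s = 1) ∧ x = ∑ s, p s * w s * R s}
        = {Rb} := by
      ext x
      constructor
      · rintro ⟨w, hw1, hw2, rfl⟩
        have : ∀ s ∈ Finset.univ, p s * w s * R s = Rb * (p s * w s) := by
          intro s _; rw [hReq s]; ring
        simp only [Set.mem_singleton_iff]
        rw [Finset.sum_congr rfl this, ← Finset.mul_sum, hw2, mul_one]
      · rintro rfl; exact hmem1
    simp only [sup, hset, csSup_singleton]
end

section
/- Let S ≥ 1, let q_1, …, q_S > 0 with ∑_s q_s = 1, let R_1, …, R_S ∈ ℝ, and let γ > 0. Define the Gibbs weights w*_s = exp(R_s/γ) / ∑_t q_t exp(R_t/γ), and set δ* = ∑_s q_s w*_s log w*_s. Then w* maximizes the reweighted risk ∑_s q_s w_s R_s over the set { w ∈ ℝ^S : w_s ≥ 0 for all s, ∑_s q_s w_s = 1, ∑_s q_s w_s log w_s ≤ δ* }. (This is the closed-form solution of the inner maximization of structural adversarial empirical risk minimization with the Kullback–Leibler divergence f(x) = x log x, with δ equal to the divergence value attained by the Gibbs weights.) -/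
lemma key_xlogx (x a : ℝ) (hx : 0 ≤ x) : x * a - x * Real.log x ≤ Real.exp a - x := by
  rcases eq_or_lt_of_le hx with h0 | h0
  · simp [← h0]
    positivity
  · have h := Real.add_one_le_exp (a - Real.log x)
    rw [Real.exp_sub, Real.exp_log h0] at h
    have h2 : (a - Real.log x + 1) * x ≤ (Real.exp a / x) * x :=
      mul_le_mul_of_nonneg_right h hx
    rw [div_mul_cancel₀ _ (ne_of_gt h0)] at h2
    nlinarith

/-- Closed-form solution of the inner maximization for structural adversarial risk with
the Kullback–Leibler divergence `f(x) = x log x`: the Gibbs weights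
`w*ₛ = exp(Rₛ/γ) / ∑ₜ qₜ exp(Rₜ/γ)` maximize the reweighted risk `∑ₛ qₛ wₛ Rₛ` over all
nonnegative weights with `∑ₛ qₛ wₛ = 1` and KL-divergence budget
`δ* = ∑ₛ qₛ w*ₛ log w*ₛ`. -/
theorem stmt11 (S : ℕ) (hS : 1 ≤ S) (q R : Fin S → ℝ) (hq : ∀ s, 0 < q s)
    (hq1 : ∑ s, q s = 1) (γ : ℝ) (hγ : 0 < γ) :
    let ws : Fin S → ℝ := fun s => Real.exp (R s / γ) / ∑ t, q t * Real.exp (R t / γ)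
    let δs : ℝ := ∑ s, q s * (ws s * Real.log (ws s))
    ((∀ s, 0 ≤ ws s) ∧ (∑ s, q s * ws s = 1) ∧
      (∑ s, q s * (ws s * Real.log (ws s)) ≤ δs)) ∧
    ∀ w : Fin S → ℝ, (∀ s, 0 ≤ w s) → (∑ s, q s * w s = 1) →
      (∑ s, q s * (w s * Real.log (w s)) ≤ δs) →
      ∑ s, q s * w s * R s ≤ ∑ s, q s * ws s * R s := by
  intro ws δs
  have hne : Nonempty (Fin S) := ⟨⟨0, by omega⟩⟩
  set Z := ∑ t, q t * Real.exp (R t / γ) with hZ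
  have hZpos : 0 < Z := Finset.sum_pos (fun t _ => mul_pos (hq t) (Real.exp_pos _)) Finset.univ_nonempty
  have hws_nonneg : ∀ s, 0 ≤ ws s := fun s =>
    div_nonneg (Real.exp_pos _).le hZpos.le
  have hws_sum : ∑ s, q s * ws s = 1 := by
    simp only [ws]
    simp_rw [← mul_div_assoc, ← Finset.sum_div]
    exact div_self (ne_of_gt hZpos)
  have hlog_ws : ∀ s, Real.log (ws s) = R s / γ - Real.log Z := fun s => by
    simp only [ws]
    rw [Real.log_div (Real.exp_ne_zero _) (ne_of_gt hZpos), Real.log_exp]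
  have hγ' : γ ≠ 0 := ne_of_gt hγ
  -- value attained by Gibbs weights
  have hval : ∑ s, q s * ws s * R s = γ * δs + γ * Real.log Z := by
    simp only [δs]
    have heq : ∀ s : Fin S, γ * (q s * (ws s * Real.log (ws s)))
        = q s * ws s * R s - γ * Real.log Z * (q s * ws s) := by
      intro s
      rw [hlog_ws s]
      field_simp
    rw [Finset.mul_sum, Finset.sum_congr rfl (fun s _ => heq s),
      Finset.sum_sub_distrib, ← Finset.mul_sum, hws_sum]
    ring
  refine ⟨⟨hws_nonneg, hws_sum, le_refl _⟩, ?_⟩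
  intro w hw hwsum hwkl
  -- Donsker–Varadhan bound: ∑ q w R ≤ γ ∑ q (w log w) + γ log Z
  have hpt : ∀ s ∈ Finset.univ,
      q s * w s * R s - γ * (q s * (w s * Real.log (w s)))
        + γ * (q s * w s) - γ * Real.log Z * (q s * w s)
      ≤ γ * (q s * (Real.exp (R s / γ) / Z)) := by
    intro s _
    have h := key_xlogx (w s) (R s / γ - Real.log Z) (hw s)
    rw [Real.exp_sub, Real.exp_log hZpos] at h
    have h2 : (w s * (R s / γ - Real.log Z) - w s * Real.log (w s)) + w s
        ≤ Real.exp (R s / γ) / Z := by linarith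
    have h3 := mul_le_mul_of_nonneg_left h2 (mul_nonneg hγ.le (hq s).le)
    calc q s * w s * R s - γ * (q s * (w s * Real.log (w s)))
          + γ * (q s * w s) - γ * Real.log Z * (q s * w s)
        = γ * q s * ((w s * (R s / γ - Real.log Z) - w s * Real.log (w s)) + w s) := by
          field_simp
          ring
      _ ≤ γ * q s * (Real.exp (R s / γ) / Z) := h3
      _ = γ * (q s * (Real.exp (R s / γ) / Z)) := by ring
  have hsum := Finset.sum_le_sum hpt
  have hR1 : ∑ s, (q s * w s * R s - γ * (q s * (w s * Real.log (w s)))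
      + γ * (q s * w s) - γ * Real.log Z * (q s * w s))
      = ∑ s, q s * w s * R s - γ * (∑ s, q s * (w s * Real.log (w s)))
        + γ * (∑ s, q s * w s) - γ * Real.log Z * (∑ s, q s * w s) := by
    rw [Finset.sum_sub_distrib, Finset.sum_add_distrib, Finset.sum_sub_distrib,
      ← Finset.mul_sum, ← Finset.mul_sum, ← Finset.mul_sum]
  have hR2 : ∑ s, γ * (q s * (Real.exp (R s / γ) / Z)) = γ := by
    have h4 : ∑ s, γ * (q s * (Real.exp (R s / γ) / Z))
        = (γ / Z) * ∑ s, q s * Real.exp (R s / γ) :=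
      by rw [Finset.mul_sum]; exact Finset.sum_congr rfl (fun s _ => by ring)
    rw [h4, ← hZ, div_mul_cancel₀ _ (ne_of_gt hZpos)]
  rw [hR1, hR2, hwsum] at hsum
  have hkl : γ * (∑ s, q s * (w s * Real.log (w s))) ≤ γ * δs :=
    mul_le_mul_of_nonneg_left hwkl hγ.le
  rw [hval]
  linarith
end

section
/- Let S ≥ 1, let p ∈ ℝ^S be a probability vector with p_s > 0 for all s, let M > 0, and let f : ℝ → ℝ be convex and twice differentiable with f(1) = 0 and f''(t) ≥ c for some c > 0 and all t ∈ [0, M]. Let δ > 0 and 0 < ε ≤ δ/(5√S·|f'(1)|). For u ∈ ℝ^S define Φ(u) = { w ∈ ℝ^S : ∑_s (p_s + u_s) f(w_s) ≤ δ, ∑_s (p_s + u_s) w_s = 1, w_s ≥ 0 for all s }, and assume Φ(u) ⊆ [0, M]^S and Φ(u) is nonempty for all ‖u‖₂ ≤ ε with p + u entrywise nonnegative. Then there exists a constant C > 0 such that for all such u, the Hausdorff distance satisfies d_H(Φ(u), Φ(0)) ≤ C·‖u‖₂, i.e., d_H(Φ(u), Φ(0)) = O(‖u‖₂). -/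
/-!
A point `w ∈ Φ(v)` is moved into `Φ(v')` at cost `O(‖v' - v‖)` in two steps. Rescaling `w` by
`(∑ₛ (pₛ + v'ₛ) wₛ)⁻¹` restores the normalisation under the new weights; since the boxed
`w` has bounded coordinates and `f`, being convex, is Lipschitz on bounded intervals, this raises
the divergence `∑ₛ (pₛ + v'ₛ) f(wₛ)` only by some `η = O(‖v' - v‖)`. The constant density is a
Slater point of divergence at most `δ / 2`, and by convexity moving the fraction
`η / (η + δ / 2)` of the way towards it brings the divergence back to `δ`. For large `‖u‖` the
diameter `√S · M` of the box already gives the bound.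
-/

/-- The perturbed feasible set of adversarial weights over `S` latent categories:
`Φ(u) = { w : ∑ₛ (pₛ+uₛ) f(wₛ) ≤ δ, ∑ₛ (pₛ+uₛ) wₛ = 1, wₛ ≥ 0 }`, as a subset of
Euclidean space so that distances are measured in the `ℓ²` norm. -/
def Phi (S : ℕ) (p : EuclideanSpace ℝ (Fin S)) (f : ℝ → ℝ) (δ : ℝ)
    (u : EuclideanSpace ℝ (Fin S)) : Set (EuclideanSpace ℝ (Fin S)) :=
  {w | (∑ s, (p s + u s) * f (w s) ≤ δ) ∧ (∑ s, (p s + u s) * w s = 1) ∧ ∀ s, 0 ≤ w s}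

open Set Metric
open scoped NNReal

variable {ι : Type*} [Fintype ι]

lemma EuclideanSpace.norm_le_sqrt_card_mul {x : EuclideanSpace ℝ ι} {m : ℝ} (hm : 0 ≤ m)
    (hx : ∀ i, |x i| ≤ m) : ‖x‖ ≤ √(Fintype.card ι) * m := by
  rw [EuclideanSpace.norm_eq, ← Real.sqrt_sq hm, ← Real.sqrt_mul (Nat.cast_nonneg _)]
  gcongr
  calc ∑ i, ‖x i‖ ^ 2 ≤ ∑ _i : ι, m ^ 2 := by
        gcongr with i
        rw [Real.norm_eq_abs]
        exact hx i
    _ = Fintype.card ι * m ^ 2 := by simp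

lemma EuclideanSpace.abs_sum_mul_le (x : EuclideanSpace ℝ ι) {g : ι → ℝ} {m : ℝ} (hm : 0 ≤ m)
    (hg : ∀ i, |g i| ≤ m) : |∑ i, x i * g i| ≤ ‖x‖ * (√(Fintype.card ι) * m) := by
  calc |∑ i, x i * g i| = |inner ℝ x (WithLp.toLp 2 g)| := by
        simp [PiLp.inner_apply, mul_comm]
    _ ≤ ‖x‖ * ‖WithLp.toLp 2 g‖ := abs_real_inner_le_norm _ _
    _ ≤ ‖x‖ * (√(Fintype.card ι) * m) := by
        gcongr
        exact EuclideanSpace.norm_le_sqrt_card_mul hm hg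

theorem ConvexOn.exists_near_mem_sublevel {E : Type*} [NormedAddCommGroup E] [NormedSpace ℝ E]
    {K : Set E} {G : E → ℝ} (hG : ConvexOn ℝ K G) {x z : E} (hx : x ∈ K) (hz : z ∈ K)
    {δ η σ : ℝ} (hη : 0 ≤ η) (hσ : 0 < σ) (hGx : G x ≤ δ + η) (hGz : G z ≤ δ - σ) :
    ∃ y ∈ K, G y ≤ δ ∧ ‖y - x‖ ≤ η / σ * ‖z - x‖ := by
  set θ := η / (η + σ)
  have hθ0 : 0 ≤ θ := by positivity
  have hθ1 : θ ≤ 1 := div_le_one_of_le₀ (by linarith) (by positivity)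
  have h1θ : 0 ≤ 1 - θ := by linarith
  refine ⟨x + θ • (z - x), hG.1.add_smul_sub_mem hx hz ⟨hθ0, hθ1⟩, ?_, ?_⟩
  · have hcomb : x + θ • (z - x) = (1 - θ) • x + θ • z := by module
    calc G (x + θ • (z - x)) ≤ (1 - θ) * G x + θ * G z := by
          rw [hcomb]; exact hG.2 hx hz h1θ hθ0 (by ring)
      _ ≤ (1 - θ) * (δ + η) + θ * (δ - σ) := by gcongr
      _ = δ := by
          have hθησ : θ * (η + σ) = η := div_mul_cancel₀ _ (by positivity)
          linear_combination -hθησ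
  · rw [add_sub_cancel_left, norm_smul, Real.norm_of_nonneg hθ0]
    gcongr
    exact div_le_div_of_nonneg_left hη hσ (by linarith)

def densities (q : EuclideanSpace ℝ ι) : Set (EuclideanSpace ℝ ι) :=
  {w | ∑ i, q i * w i = 1 ∧ ∀ i, 0 ≤ w i}

/-- The `f`-divergence from `q` of the measure with density `w` with respect to `q`. -/
def fDiv (f : ℝ → ℝ) (q w : EuclideanSpace ℝ ι) : ℝ :=
  ∑ i, q i * f (w i)

lemma Phi_eq (S : ℕ) (p : EuclideanSpace ℝ (Fin S)) (f : ℝ → ℝ) (δ : ℝ)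
    (u : EuclideanSpace ℝ (Fin S)) :
    Phi S p f δ u = {w | w ∈ densities (p + u) ∧ fDiv f (p + u) w ≤ δ} := by
  ext w
  simp only [Phi, densities, fDiv, PiLp.add_apply, mem_ofPred_eq]
  tauto

lemma convex_densities (q : EuclideanSpace ℝ ι) : Convex ℝ (densities q) := by
  rintro x ⟨hx1, hx0⟩ y ⟨hy1, hy0⟩ a b ha hb hab
  refine ⟨?_, fun i => ?_⟩
  · calc ∑ i, q i * (a • x + b • y) i = a * ∑ i, q i * x i + b * ∑ i, q i * y i := by
          simp only [PiLp.add_apply, PiLp.smul_apply, smul_eq_mul, Finset.mul_sum,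
            ← Finset.sum_add_distrib]
          exact Finset.sum_congr rfl fun i _ => by ring
      _ = 1 := by rw [hx1, hy1, mul_one, mul_one, hab]
  · have := hx0 i
    have := hy0 i
    simp only [PiLp.add_apply, PiLp.smul_apply, smul_eq_mul]
    positivity

lemma convexOn_fDiv {f : ℝ → ℝ} (hf : ConvexOn ℝ univ f) {q : EuclideanSpace ℝ ι}
    (hq : ∀ i, 0 ≤ q i) : ConvexOn ℝ univ (fDiv f q) := by
  refine ⟨convex_univ, fun x _ y _ a b ha hb hab => ?_⟩
  calc fDiv f q (a • x + b • y) ≤ ∑ i, q i * (a * f (x i) + b * f (y i)) := by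
        refine Finset.sum_le_sum fun i _ => mul_le_mul_of_nonneg_left ?_ (hq i)
        exact hf.2 (mem_univ _) (mem_univ _) ha hb hab
    _ = a • fDiv f q x + b • fDiv f q y := by
        simp only [fDiv, smul_eq_mul, Finset.mul_sum, ← Finset.sum_add_distrib]
        exact Finset.sum_congr rfl fun i _ => by ring

lemma exists_mem_densities_near {q w : EuclideanSpace ℝ ι} (hw : ∀ i, 0 ≤ w i) {e : ℝ}
    (ha : |∑ i, q i * w i - 1| ≤ e) (he : e ≤ 1 / 2) :
    ∃ w₀ ∈ densities q, ∀ i, |w₀ i - w i| ≤ 2 * e * w i := by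
  set a := ∑ i, q i * w i
  have ha0 : 1 / 2 ≤ a := by linarith [(abs_le.1 ha).1]
  refine ⟨a⁻¹ • w, ⟨?_, fun i => ?_⟩, fun i => ?_⟩
  · simp only [PiLp.smul_apply, smul_eq_mul, mul_left_comm _ a⁻¹, ← Finset.mul_sum]
    exact inv_mul_cancel₀ (by positivity)
  · have := hw i
    simp only [PiLp.smul_apply, smul_eq_mul]
    positivity
  · have hrescale : (a⁻¹ • w) i - w i = -((a - 1) / a) * w i := by
      simp only [PiLp.smul_apply, smul_eq_mul]
      field_simp
      ring
    rw [hrescale, abs_mul, abs_neg, abs_div, abs_of_pos (by positivity : 0 < a),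
      abs_of_nonneg (hw i)]
    refine mul_le_mul_of_nonneg_right ?_ (hw i)
    rw [div_le_iff₀ (by positivity)]
    nlinarith [abs_nonneg (a - 1)]

lemma exists_mem_densities_fDiv_le {f : ℝ → ℝ} (hf1 : f 1 = 0) {L : ℝ≥0}
    (hL : LipschitzOnWith L f (Icc 0 2)) {q : EuclideanSpace ℝ ι}
    (hT : |∑ i, q i - 1| ≤ 1 / 2) :
    ∃ z ∈ densities q, (∀ i, z i ∈ Icc 0 2) ∧ fDiv f q z ≤ L * |∑ i, q i - 1| := by
  set T := ∑ i, q i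
  have hT0 : 1 / 2 ≤ T := by linarith [(abs_le.1 hT).1]
  have hTinv : T⁻¹ ∈ Icc (0 : ℝ) 2 := ⟨by positivity, by
    rw [inv_le_comm₀ (by positivity) (by norm_num)]; linarith⟩
  refine ⟨WithLp.toLp 2 fun _ => T⁻¹, ⟨?_, fun _ => hTinv.1⟩, fun _ => hTinv, ?_⟩
  · exact (Finset.sum_mul _ _ _).symm.trans (mul_inv_cancel₀ (by positivity))
  · have hfT : f T⁻¹ ≤ L * |T⁻¹ - 1| := by
      have := hL.dist_le_mul T⁻¹ hTinv 1 ⟨zero_le_one, one_le_two⟩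
      rw [Real.dist_eq, Real.dist_eq, hf1, sub_zero] at this
      exact (le_abs_self _).trans this
    calc fDiv f q (WithLp.toLp 2 fun _ => T⁻¹) = T * f T⁻¹ :=
          (Finset.sum_mul Finset.univ (fun i => q i) (f T⁻¹)).symm
      _ ≤ T * (L * |T⁻¹ - 1|) := by gcongr
      _ = L * |T - 1| := by
          rw [mul_left_comm, ← abs_of_pos (by positivity : 0 < T), ← abs_mul,
            abs_of_pos (by positivity : 0 < T), mul_sub, mul_inv_cancel₀ (by positivity),
            mul_one, abs_sub_comm]

lemma fDiv_le_fDiv_add {f : ℝ → ℝ} {s : Set ℝ} {L : ℝ≥0} (hL : LipschitzOnWith L f s)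
    {q x y : EuclideanSpace ℝ ι} (hq : ∀ i, 0 ≤ q i) (hx : ∀ i, x i ∈ s) (hy : ∀ i, y i ∈ s)
    {d : ℝ} (hxy : ∀ i, |x i - y i| ≤ d) :
    fDiv f q x ≤ fDiv f q y + (∑ i, q i) * (L * d) := by
  rw [Finset.sum_mul, fDiv, fDiv, ← Finset.sum_add_distrib]
  refine Finset.sum_le_sum fun i _ => ?_
  rw [← mul_add]
  refine mul_le_mul_of_nonneg_left ?_ (hq i)
  have hfxy := hL.dist_le_mul (x i) (hx i) (y i) (hy i)
  rw [Real.dist_eq, Real.dist_eq] at hfxy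
  linarith [le_abs_self (f (x i) - f (y i)), mul_le_mul_of_nonneg_left (hxy i) L.coe_nonneg]

lemma abs_sum_mul_sub_sum_mul_le (q q' : EuclideanSpace ℝ ι) {g : ι → ℝ} {m : ℝ} (hm : 0 ≤ m)
    (hg : ∀ i, |g i| ≤ m) :
    |∑ i, q' i * g i - ∑ i, q i * g i| ≤ ‖q' - q‖ * (√(Fintype.card ι) * m) := by
  have hsub : ∑ i, q' i * g i - ∑ i, q i * g i = ∑ i, (q' - q) i * g i := by
    simp only [PiLp.sub_apply, sub_mul, Finset.sum_sub_distrib]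
  rw [hsub]
  exact EuclideanSpace.abs_sum_mul_le _ hm hg

theorem exists_rescaled_mem_densities {f : ℝ → ℝ} (hf1 : f 1 = 0) {M ρ : ℝ} {L : ℝ≥0}
    (hM : 1 ≤ M) (hL : LipschitzOnWith L f (Icc 0 (2 * M))) {q q' : EuclideanSpace ℝ ι}
    (hq' : ∀ i, 0 ≤ q' i) (hmass : ∑ i, q' i ≤ 3 / 2) (hqq' : ‖q' - q‖ ≤ ρ)
    (hρ : 2 * (√(Fintype.card ι) * M) * ρ ≤ 1)
    {w : EuclideanSpace ℝ ι} (hw : w ∈ densities q) (hwM : ∀ i, w i ≤ M) :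
    ∃ w₀ ∈ densities q', (∀ i, w₀ i ≤ 2 * M) ∧
      fDiv f q' w₀ ≤ fDiv f q w + 4 * L * M * (√(Fintype.card ι) * M * ρ) ∧
      ‖w₀ - w‖ ≤ 2 * (√(Fintype.card ι) * M) ^ 2 * ρ := by
  set β := √(Fintype.card ι) * M
  have hρ0 : 0 ≤ ρ := (norm_nonneg _).trans hqq'
  have hwM' : ∀ i, |w i| ≤ M := fun i => (abs_of_nonneg (hw.2 i)).trans_le (hwM i)
  have hw_mem : ∀ i, w i ∈ Icc 0 (2 * M) := fun i => ⟨hw.2 i, by linarith [hwM i]⟩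
  have hnorm : |∑ i, q' i * w i - 1| ≤ β * ρ := by
    rw [← hw.1]
    calc _ ≤ ‖q' - q‖ * β := abs_sum_mul_sub_sum_mul_le q q' (by linarith) hwM'
      _ ≤ β * ρ := by rw [mul_comm]; gcongr
  obtain ⟨w₀, hw₀, hw₀w⟩ := exists_mem_densities_near hw.2 hnorm (by linarith)
  have hw₀w' : ∀ i, |w₀ i - w i| ≤ 2 * (β * ρ) * M := fun i =>
    (hw₀w i).trans (by gcongr; exact hwM i)
  have hw₀_mem : ∀ i, w₀ i ∈ Icc 0 (2 * M) := fun i =>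
    ⟨hw₀.2 i, by nlinarith [(abs_le.1 (hw₀w i)).2, hwM i, hw.2 i]⟩
  refine ⟨w₀, hw₀, fun i => (hw₀_mem i).2, ?_, ?_⟩
  · have hfw_le : ∀ i, |f (w i)| ≤ L * M := fun i => by
      have hf := hL.dist_le_mul (w i) (hw_mem i) 1 ⟨zero_le_one, by linarith⟩
      rw [Real.dist_eq, Real.dist_eq, hf1, sub_zero] at hf
      exact hf.trans (by gcongr; rw [abs_le]; constructor <;> linarith [hw.2 i, hwM i])
    have hreweight : fDiv f q' w - fDiv f q w ≤ L * (β * ρ) :=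
      calc _ ≤ ‖q' - q‖ * (√(Fintype.card ι) * (L * M)) :=
            (le_abs_self _).trans (abs_sum_mul_sub_sum_mul_le q q' (by positivity) hfw_le)
        _ ≤ ρ * (√(Fintype.card ι) * (L * M)) := by gcongr
        _ = L * (β * ρ) := by ring
    have hmove := fDiv_le_fDiv_add hL hq' hw₀_mem hw_mem hw₀w'
    have hmove' : (∑ i, q' i) * (L * (2 * (β * ρ) * M)) ≤ 3 / 2 * (L * (2 * (β * ρ) * M)) :=
      mul_le_mul_of_nonneg_right hmass (by positivity)
    have hM' : L * (β * ρ) * 1 ≤ L * (β * ρ) * M := by gcongr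
    linarith
  · exact (EuclideanSpace.norm_le_sqrt_card_mul (by positivity) hw₀w').trans_eq (by ring)

theorem exists_mem_densities_fDiv_le_near {f : ℝ → ℝ} (hconv : ConvexOn ℝ univ f)
    (hf1 : f 1 = 0) {δ M ρ : ℝ} {L : ℝ≥0} (hδ : 0 < δ) (hM : 1 ≤ M)
    (hL : LipschitzOnWith L f (Icc 0 (2 * M))) {q q' : EuclideanSpace ℝ ι}
    (hq' : ∀ i, 0 ≤ q' i) (hqq' : ‖q' - q‖ ≤ ρ) (hT : |∑ i, q' i - 1| ≤ √(Fintype.card ι) * ρ)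
    (hρ : 2 * (√(Fintype.card ι) * M) * (1 + L / δ) * ρ ≤ 1)
    {w : EuclideanSpace ℝ ι} (hw : w ∈ densities q) (hfw : fDiv f q w ≤ δ)
    (hwM : ∀ i, w i ≤ M) :
    ∃ w' ∈ densities q', fDiv f q' w' ≤ δ ∧
      ‖w' - w‖ ≤ 2 * (√(Fintype.card ι) * M) ^ 2 * (1 + 8 * L * M / δ) * ρ := by
  set β := √(Fintype.card ι) * M
  have hρ0 : 0 ≤ ρ := (norm_nonneg _).trans hqq'
  have hM0 : 0 < M := by linarith
  have hsplit : 2 * β * (1 + L / δ) * ρ = 2 * β * ρ + 2 * β * (L / δ) * ρ := by ring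
  have hβρ : 2 * β * ρ ≤ 1 := by linarith [show 0 ≤ 2 * β * (L / δ) * ρ by positivity]
  have hLβρ : L * (β * ρ) ≤ δ / 2 := by
    rw [show L * (β * ρ) = δ / 2 * (2 * β * (L / δ) * ρ) by field_simp]
    exact mul_le_of_le_one_right (by positivity)
      (by linarith [show 0 ≤ 2 * β * ρ by positivity])
  have hT' : |∑ i, q' i - 1| ≤ β * ρ :=
    hT.trans (by gcongr; nlinarith [Real.sqrt_nonneg (Fintype.card ι)])
  obtain ⟨w₀, hw₀, hw₀M, hfw₀, hw₀w⟩ := exists_rescaled_mem_densities hf1 hM hL hq'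
    (by linarith [(abs_le.1 hT').2]) hqq' hβρ hw hwM
  obtain ⟨z, hz, hzM, hfz⟩ := exists_mem_densities_fDiv_le hf1
    (hL.mono (Icc_subset_Icc_right (by linarith))) (hT'.trans (by linarith))
  have hfz' : fDiv f q' z ≤ δ - δ / 2 := by
    have : L * |∑ i, q' i - 1| ≤ L * (β * ρ) := by gcongr
    linarith
  obtain ⟨w', hw', hfw', hw'w₀⟩ := ((convexOn_fDiv hconv hq').subset (subset_univ _)
    (convex_densities q')).exists_near_mem_sublevel (η := 4 * L * M * (β * ρ)) hw₀ hz
    (by positivity) (half_pos hδ) (by linarith) hfz'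
  refine ⟨w', hw', hfw', ?_⟩
  have hzw₀ : ‖z - w₀‖ ≤ 2 * β := by
    refine (EuclideanSpace.norm_le_sqrt_card_mul (m := 2 * M) (by linarith) fun i => ?_).trans_eq
      (by ring)
    rw [PiLp.sub_apply, abs_le]
    constructor <;> linarith [(hzM i).1, (hzM i).2, hw₀.2 i, hw₀M i]
  calc ‖w' - w‖ ≤ ‖w' - w₀‖ + ‖w₀ - w‖ := norm_sub_le_norm_sub_add_norm_sub _ _ _
    _ ≤ 4 * L * M * (β * ρ) / (δ / 2) * (2 * β) + 2 * β ^ 2 * ρ :=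
        add_le_add (hw'w₀.trans (by gcongr)) hw₀w
    _ = 2 * β ^ 2 * (1 + 8 * L * M / δ) * ρ := by field_simp; ring

lemma hausdorffDist_le_of_forall_mem_Icc {V W : Set (EuclideanSpace ℝ ι)} {M : ℝ} (hM : 0 ≤ M)
    (hV : V.Nonempty) (hW : W.Nonempty) (hVM : ∀ v ∈ V, ∀ i, v i ∈ Icc 0 M)
    (hWM : ∀ w ∈ W, ∀ i, w i ∈ Icc 0 M) : hausdorffDist V W ≤ √(Fintype.card ι) * M := by
  have hdist : ∀ v ∈ V, ∀ w ∈ W, dist v w ≤ √(Fintype.card ι) * M := fun v hv w hw => by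
    rw [dist_eq_norm]
    refine EuclideanSpace.norm_le_sqrt_card_mul hM fun i => ?_
    rw [PiLp.sub_apply, abs_le]
    constructor <;> linarith [(hVM v hv i).1, (hVM v hv i).2, (hWM w hw i).1, (hWM w hw i).2]
  obtain ⟨v₀, hv₀⟩ := hV
  obtain ⟨w₀, hw₀⟩ := hW
  exact hausdorffDist_le_of_mem_dist (by positivity) (fun v hv => ⟨w₀, hw₀, hdist v hv w₀ hw₀⟩)
    fun w hw => ⟨v₀, hv₀, by rw [dist_comm]; exact hdist v₀ hv₀ w hw⟩

theorem exists_mem_Phi_dist_le {S : ℕ} {p : EuclideanSpace ℝ (Fin S)} (hp1 : ∑ s, p s = 1)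
    {f : ℝ → ℝ} (hconv : ConvexOn ℝ univ f) (hf1 : f 1 = 0) {δ M ρ : ℝ} {L : ℝ≥0} (hδ : 0 < δ)
    (hM : 1 ≤ M) (hL : LipschitzOnWith L f (Icc 0 (2 * M))) {v v' : EuclideanSpace ℝ (Fin S)}
    (hpv' : ∀ s, 0 ≤ p s + v' s) (hvv' : ‖v' - v‖ ≤ ρ) (hv' : ‖v'‖ ≤ ρ)
    (hρ : 2 * (√S * M) * (1 + L / δ) * ρ ≤ 1) {w : EuclideanSpace ℝ (Fin S)}
    (hw : w ∈ Phi S p f δ v) (hwM : ∀ s, w s ≤ M) :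
    ∃ w' ∈ Phi S p f δ v', dist w w' ≤ 2 * (√S * M) ^ 2 * (1 + 8 * L * M / δ) * ρ := by
  have hmass : |∑ s, (p + v') s - 1| ≤ √S * ρ := by
    have hsum : ∑ s, (p + v') s - 1 = ∑ s, v' s * 1 := by simp [Finset.sum_add_distrib, hp1]
    rw [hsum]
    calc _ ≤ ‖v'‖ * (√(Fintype.card (Fin S)) * 1) :=
          EuclideanSpace.abs_sum_mul_le v' zero_le_one (by simp)
      _ ≤ √S * ρ := by rw [Fintype.card_fin, mul_one, mul_comm]; gcongr
  rw [Phi_eq] at hw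
  obtain ⟨w', hw', hfw', hw'w⟩ := exists_mem_densities_fDiv_le_near hconv hf1 hδ hM hL
    (q := p + v) (q' := p + v') hpv' (by simpa using hvv') (by simpa using hmass)
    (by simpa using hρ) hw.1 hw.2 hwM
  refine ⟨w', by rw [Phi_eq]; exact ⟨hw', hfw'⟩, ?_⟩
  rw [dist_comm, dist_eq_norm]
  simpa using hw'w

theorem stmt13_general (S : ℕ) (hS : 1 ≤ S) (p : EuclideanSpace ℝ (Fin S)) (hp : ∀ s, 0 < p s)
    (hp1 : ∑ s, p s = 1) (M : ℝ)
    (f : ℝ → ℝ) (hconv : ConvexOn ℝ Set.univ f) (hf1 : f 1 = 0)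
    (δ : ℝ) (hδ : 0 < δ) (ε : ℝ) (hε : 0 < ε)
    (hΦsub : ∀ u : EuclideanSpace ℝ (Fin S), ‖u‖ ≤ ε → (∀ s, 0 ≤ p s + u s) →
      Phi S p f δ u ⊆ {w | ∀ s, w s ∈ Set.Icc (0 : ℝ) M})
    (hΦne : ∀ u : EuclideanSpace ℝ (Fin S), ‖u‖ ≤ ε → (∀ s, 0 ≤ p s + u s) →
      (Phi S p f δ u).Nonempty) :
    ∃ C > (0 : ℝ), ∀ u : EuclideanSpace ℝ (Fin S), ‖u‖ ≤ ε → (∀ s, 0 ≤ p s + u s) →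
      Metric.hausdorffDist (Phi S p f δ u) (Phi S p f δ 0) ≤ C * ‖u‖ := by
  set M' := max M 1
  obtain ⟨L, hL⟩ := hconv.locallyLipschitz.locallyLipschitzOn.exists_lipschitzOnWith_of_compact
    (isCompact_Icc (a := (0 : ℝ)) (b := 2 * M'))
  set β := √S * M'
  have hβ : 0 < β := mul_pos (Real.sqrt_pos.2 (by exact_mod_cast hS)) (by positivity)
  have hbox : ∀ u, ‖u‖ ≤ ε → (∀ s, 0 ≤ p s + u s) → ∀ w ∈ Phi S p f δ u, ∀ s, w s ∈ Icc 0 M' :=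
    fun u hu hpu w hw s => Icc_subset_Icc_right (le_max_left _ _) (hΦsub u hu hpu hw s)
  have hp0 : ∀ s, 0 ≤ p s + (0 : EuclideanSpace ℝ (Fin S)) s := by simpa using fun s => (hp s).le
  have hε0 : ‖(0 : EuclideanSpace ℝ (Fin S))‖ ≤ ε := by simpa using hε.le
  refine ⟨2 * β ^ 2 * (1 + 8 * L * M' / δ), by positivity, fun u hu hpu => ?_⟩
  rcases le_or_gt (2 * β * (1 + L / δ) * ‖u‖) 1 with hsmall | hlarge
  · refine hausdorffDist_le_of_mem_dist (by positivity) (fun w hw => ?_) (fun w hw => ?_)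
    · exact exists_mem_Phi_dist_le hp1 hconv hf1 hδ (le_max_right M 1) hL hp0 (by simp) (by simp)
        hsmall hw fun s => (hbox u hu hpu w hw s).2
    · exact exists_mem_Phi_dist_le hp1 hconv hf1 hδ (le_max_right M 1) hL hpu (by simp) le_rfl
        hsmall hw fun s => (hbox 0 hε0 hp0 w hw s).2
  · have hLM : (L : ℝ) ≤ 8 * L * M' := by nlinarith [le_max_right M 1, L.coe_nonneg]
    calc hausdorffDist (Phi S p f δ u) (Phi S p f δ 0) ≤ β := by
          simpa using hausdorffDist_le_of_forall_mem_Icc (by positivity) (hΦne u hu hpu)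
            (hΦne 0 hε0 hp0) (hbox u hu hpu) (hbox 0 hε0 hp0)
      _ ≤ β * (2 * β * (1 + L / δ) * ‖u‖) := le_mul_of_one_le_right hβ.le hlarge.le
      _ = 2 * β ^ 2 * (1 + L / δ) * ‖u‖ := by ring
      _ ≤ 2 * β ^ 2 * (1 + 8 * L * M' / δ) * ‖u‖ := by gcongr

/-- Lemma 6 of the paper: the perturbed feasible set `Φ(u)` converges to `Φ(0)` in
Hausdorff distance at rate `O(‖u‖₂)`. -/
theorem stmt13 (S : ℕ) (hS : 1 ≤ S) (p : EuclideanSpace ℝ (Fin S)) (hp : ∀ s, 0 < p s)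
    (hp1 : ∑ s, p s = 1) (M : ℝ) (hM : 0 < M)
    (f : ℝ → ℝ) (hconv : ConvexOn ℝ Set.univ f) (hf1 : f 1 = 0)
    (hdiff : Differentiable ℝ f) (hdiff2 : Differentiable ℝ (deriv f))
    (c : ℝ) (hc : 0 < c) (hf'' : ∀ t ∈ Set.Icc (0 : ℝ) M, c ≤ deriv (deriv f) t)
    (δ : ℝ) (hδ : 0 < δ) (ε : ℝ) (hε : 0 < ε)
    (hεδ : ε ≤ δ / (5 * Real.sqrt S * |deriv f 1|))
    (hΦsub : ∀ u : EuclideanSpace ℝ (Fin S), ‖u‖ ≤ ε → (∀ s, 0 ≤ p s + u s) →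
      Phi S p f δ u ⊆ {w | ∀ s, w s ∈ Set.Icc (0 : ℝ) M})
    (hΦne : ∀ u : EuclideanSpace ℝ (Fin S), ‖u‖ ≤ ε → (∀ s, 0 ≤ p s + u s) →
      (Phi S p f δ u).Nonempty) :
    ∃ C > (0 : ℝ), ∀ u : EuclideanSpace ℝ (Fin S), ‖u‖ ≤ ε → (∀ s, 0 ≤ p s + u s) →
      Metric.hausdorffDist (Phi S p f δ u) (Phi S p f δ 0) ≤ C * ‖u‖ :=
  stmt13_general S hS p hp hp1 M f hconv hf1 δ hδ ε hε hΦsub hΦne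
end

section
/- Let S ≥ 1, let p ∈ ℝ^S be a probability vector, let f : ℝ → ℝ be convex with f(1) = 0, and let δ > 0. Let w⁰ ∈ ℝ^S with w⁰_s ≥ 0 for all s and ∑_s p_s f(w⁰_s) ≤ δ, and let u ∈ ℝ^S with p_s + u_s ≥ 0 for all s. Set β = δ/(δ + ‖f(w⁰)‖₂·‖u‖₂), where f(w⁰) denotes the vector (f(w⁰_1), …, f(w⁰_S)). Then the convex combination v = β·w⁰ + (1−β)·𝟙 (with 𝟙 the all-ones vector) satisfies ∑_s (p_s + u_s) f(v_s) ≤ δ. -/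
/-- The Euclidean norm of a vector in `ℝ^S`. -/
noncomputable def norm2 {S : ℕ} (v : Fin S → ℝ) : ℝ := Real.sqrt (∑ s, (v s) ^ 2)

lemma norm2_nonneg {S : ℕ} (v : Fin S → ℝ) : 0 ≤ norm2 v := Real.sqrt_nonneg _

/-- Feasibility step in the proof of Lemma 6: shrinking a feasible weight vector `w⁰`
toward the all-ones vector by the factor `β = δ/(δ + ‖f(w⁰)‖₂·‖u‖₂)` restores feasibility
under a perturbation `u` of the category probabilities `p`. -/
theorem stmt14 (S : ℕ) (hS : 1 ≤ S) (p : Fin S → ℝ) (hp : ∀ s, 0 ≤ p s)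
    (hp1 : ∑ s, p s = 1) (f : ℝ → ℝ) (hconv : ConvexOn ℝ Set.univ f) (hf1 : f 1 = 0)
    (δ : ℝ) (hδ : 0 < δ) (w0 u : Fin S → ℝ)
    (hw0 : ∀ s, 0 ≤ w0 s) (hfeas : ∑ s, p s * f (w0 s) ≤ δ)
    (hu : ∀ s, 0 ≤ p s + u s) :
    let β : ℝ := δ / (δ + norm2 (fun s => f (w0 s)) * norm2 u)
    ∑ s, (p s + u s) * f (β * w0 s + (1 - β)) ≤ δ := by
  intro β
  set N : ℝ := norm2 (fun s => f (w0 s)) * norm2 u with hN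
  have hN0 : 0 ≤ N := mul_nonneg (norm2_nonneg _) (norm2_nonneg _)
  have hden : 0 < δ + N := by linarith
  have hβ0 : 0 ≤ β := div_nonneg hδ.le hden.le
  have hβ1 : β ≤ 1 := by
    rw [div_le_one hden]; linarith
  -- pointwise convexity bound
  have hpt : ∀ s, f (β * w0 s + (1 - β)) ≤ β * f (w0 s) := by
    intro s
    have := hconv.2 (Set.mem_univ (w0 s)) (Set.mem_univ (1 : ℝ)) hβ0
      (by linarith : (0:ℝ) ≤ 1 - β) (by ring)
    simpa [hf1] using this
  have step1 : ∑ s, (p s + u s) * f (β * w0 s + (1 - β)) ≤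
      β * (∑ s, p s * f (w0 s) + ∑ s, u s * f (w0 s)) := by
    calc ∑ s, (p s + u s) * f (β * w0 s + (1 - β))
        ≤ ∑ s, (p s + u s) * (β * f (w0 s)) := by
          apply Finset.sum_le_sum
          intro s _
          exact mul_le_mul_of_nonneg_left (hpt s) (hu s)
      _ = β * (∑ s, p s * f (w0 s) + ∑ s, u s * f (w0 s)) := by
          rw [← Finset.sum_add_distrib, Finset.mul_sum]
          congr 1; ext s; ring
  -- Cauchy–Schwarz
  have hCS : ∑ s, u s * f (w0 s) ≤ N := by
    have := Real.sum_mul_le_sqrt_mul_sqrt Finset.univ u (fun s => f (w0 s))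
    rw [hN, norm2, norm2, mul_comm]
    exact this
  have hsum : ∑ s, p s * f (w0 s) + ∑ s, u s * f (w0 s) ≤ δ + N := by linarith
  calc ∑ s, (p s + u s) * f (β * w0 s + (1 - β)) ≤
      β * (∑ s, p s * f (w0 s) + ∑ s, u s * f (w0 s)) := step1
    _ ≤ β * (δ + N) := mul_le_mul_of_nonneg_left hsum hβ0
    _ = δ := div_mul_cancel₀ δ hden.ne'
end

section
/- Let μ be a probability measure on a measurable space Ω, let f : ℝ → ℝ be convex with f(1) = 0, and let δ > 0. Let r ∈ U_f and let A ⊆ Ω be measurable with 0 < μ(A) < 1. Define r̄ : Ω → [0,∞) by r̄ = (1/μ(A))·∫_A r dμ on A and r̄ = (1/μ(Ω∖A))·∫_{Ω∖A} r dμ on Ω∖A (the conditional averages of r on A and its complement). Then r̄ ∈ U_f and ∫_A r̄ dμ = ∫_A r dμ; that is, replacing an adversarial density ratio by its conditional averages over the error set and its complement preserves both the f-divergence feasibility and the value of the adversarially weighted 0-1 risk. -/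
open MeasureTheory
open scoped Classical

/-!
The averaged ratio `r̄` is the conditional expectation of `r` given the σ-algebra generated by `A`.
It has the same integral as `r` over `A` and over `Aᶜ`, which gives `∫ r̄ = ∫ r = 1` and
`∫_A r̄ = ∫_A r`, and Jensen's inequality on each of the two cells gives `∫ f ∘ r̄ ≤ ∫ f ∘ r ≤ δ`.
-/

open Set

/-- Stated with integrals rather than averages, this also holds when `μ s = 0`: the average is
then a junk value, but both sides vanish. -/
theorem ConvexOn.setIntegral_map_setAverage_le {α E : Type*} [MeasurableSpace α]
    {μ : Measure α} [IsFiniteMeasure μ] [NormedAddCommGroup E] [NormedSpace ℝ E]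
    [FiniteDimensional ℝ E] {φ : E → ℝ} (hφ : ConvexOn ℝ univ φ) {g : α → E} (s : Set α)
    (hg : Integrable g μ) (hφg : Integrable (fun x => φ (g x)) μ) :
    ∫ _ in s, φ (⨍ y in s, g y ∂μ) ∂μ ≤ ∫ x in s, φ (g x) ∂μ := by
  rcases eq_or_ne (μ s) 0 with hs | hs
  · simp [Measure.restrict_eq_zero.mpr hs]
  rw [← setIntegral_setAverage μ (fun x => φ (g x)), setIntegral_const, setIntegral_const]
  exact smul_le_smul_of_nonneg_left
    (hφ.map_set_average_le (hφ.continuousOn isOpen_univ) isClosed_univ hs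
      (measure_ne_top μ s) (by simp) hg.integrableOn hφg.integrableOn)
    measureReal_nonneg

section PiecewiseAverage

variable {α : Type*} [MeasurableSpace α] {μ : Measure α} {s : Set α} {g : α → ℝ}

noncomputable def piecewiseAverage (μ : Measure α) (s : Set α) (g : α → ℝ) : α → ℝ :=
  s.piecewise (fun _ => ⨍ y in s, g y ∂μ) (fun _ => ⨍ y in sᶜ, g y ∂μ)

theorem comp_piecewiseAverage (φ : ℝ → ℝ) :
    (fun x => φ (piecewiseAverage μ s g x)) =
      s.piecewise (fun _ => φ (⨍ y in s, g y ∂μ)) (fun _ => φ (⨍ y in sᶜ, g y ∂μ)) :=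
  funext fun _ => apply_piecewise _ _ _ (fun _ => φ)

theorem measurable_piecewiseAverage (hs : MeasurableSet s) :
    Measurable (piecewiseAverage μ s g) :=
  measurable_const.piecewise hs measurable_const

theorem piecewiseAverage_nonneg (hg : ∀ x, 0 ≤ g x) (x : α) : 0 ≤ piecewiseAverage μ s g x := by
  have setAverage_nonneg (t : Set α) : 0 ≤ ⨍ y in t, g y ∂μ := by
    rw [setAverage_eq]
    exact smul_nonneg (inv_nonneg.mpr measureReal_nonneg) (integral_nonneg hg)
  by_cases hx : x ∈ s <;> simp [piecewiseAverage, hx, setAverage_nonneg]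

variable [IsFiniteMeasure μ]

theorem integrable_comp_piecewiseAverage (φ : ℝ → ℝ) (hs : MeasurableSet s) :
    Integrable (fun x => φ (piecewiseAverage μ s g x)) μ := by
  rw [comp_piecewiseAverage]
  exact Integrable.piecewise hs (integrableOn_const (measure_ne_top μ s))
    (integrableOn_const (measure_ne_top μ sᶜ))

theorem integral_comp_piecewiseAverage (φ : ℝ → ℝ) (hs : MeasurableSet s) :
    ∫ x, φ (piecewiseAverage μ s g x) ∂μ =
      ∫ _ in s, φ (⨍ y in s, g y ∂μ) ∂μ + ∫ _ in sᶜ, φ (⨍ y in sᶜ, g y ∂μ) ∂μ := by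
  rw [comp_piecewiseAverage]
  exact integral_piecewise hs (integrableOn_const (measure_ne_top μ s))
    (integrableOn_const (measure_ne_top μ sᶜ))

theorem setIntegral_piecewiseAverage (hs : MeasurableSet s) :
    ∫ x in s, piecewiseAverage μ s g x ∂μ = ∫ x in s, g x ∂μ := by
  rw [← setIntegral_setAverage μ g s]
  exact setIntegral_congr_fun hs fun x hx => by simp [piecewiseAverage, hx]

theorem integral_piecewiseAverage (hs : MeasurableSet s) (hg : Integrable g μ) :
    ∫ x, piecewiseAverage μ s g x ∂μ = ∫ x, g x ∂μ := by
  have h := integral_comp_piecewiseAverage (μ := μ) (g := g) id hs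
  simp only [id, setIntegral_setAverage] at h
  rw [h, integral_add_compl hs hg]

theorem ConvexOn.integral_comp_piecewiseAverage_le {φ : ℝ → ℝ} (hφ : ConvexOn ℝ univ φ)
    (hs : MeasurableSet s) (hg : Integrable g μ) (hφg : Integrable (fun x => φ (g x)) μ) :
    ∫ x, φ (piecewiseAverage μ s g x) ∂μ ≤ ∫ x, φ (g x) ∂μ := by
  rw [integral_comp_piecewiseAverage φ hs, ← integral_add_compl hs hφg]
  exact add_le_add (hφ.setIntegral_map_setAverage_le s hg hφg)
    (hφ.setIntegral_map_setAverage_le sᶜ hg hφg)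

theorem piecewiseAverage_mem_Uf {f : ℝ → ℝ} (hf : ConvexOn ℝ univ f) {δ : ℝ} {r : α → ℝ}
    (hr : r ∈ Uf μ f δ) (hs : MeasurableSet s) : piecewiseAverage μ s r ∈ Uf μ f δ := by
  obtain ⟨-, hr_nonneg, hfr_int, hr_int, hfr_le, hr_one⟩ := hr
  refine ⟨measurable_piecewiseAverage hs, piecewiseAverage_nonneg hr_nonneg,
    integrable_comp_piecewiseAverage f hs, integrable_comp_piecewiseAverage id hs, ?_, ?_⟩
  · exact (hf.integral_comp_piecewiseAverage_le hs hr_int hfr_int).trans hfr_le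
  · rw [integral_piecewiseAverage hs hr_int, hr_one]

end PiecewiseAverage

theorem stmt15_general {Ω : Type*} [MeasurableSpace Ω] (μ : Measure Ω) [IsProbabilityMeasure μ]
    (f : ℝ → ℝ) (hconv : ConvexOn ℝ Set.univ f)
    (δ : ℝ) (r : Ω → ℝ) (hr : r ∈ Uf μ f δ)
    (A : Set Ω) (hA : MeasurableSet A) :
    let rbar : Ω → ℝ := fun ω =>
      if ω ∈ A then (∫ x in A, r x ∂μ) / (μ A).toReal
      else (∫ x in Aᶜ, r x ∂μ) / (μ Aᶜ).toReal
    rbar ∈ Uf μ f δ ∧ (∫ ω in A, rbar ω ∂μ) = ∫ ω in A, r ω ∂μ := by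
  intro rbar
  have hrbar : rbar = piecewiseAverage μ A r := by
    funext ω
    simp only [rbar, piecewiseAverage, Set.piecewise, setAverage_eq, smul_eq_mul, measureReal_def,
      div_eq_inv_mul]
  rw [hrbar]
  exact ⟨piecewiseAverage_mem_Uf hconv hr hA, setIntegral_piecewiseAverage hA⟩

/-- Replacing an adversarial density ratio by its conditional averages over the error set
`A` and its complement keeps it in the uncertainty set and preserves the adversarially
weighted 0-1 risk `∫_A r dμ`. -/
theorem stmt15 {Ω : Type*} [MeasurableSpace Ω] (μ : Measure Ω) [IsProbabilityMeasure μ]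
    (f : ℝ → ℝ) (hconv : ConvexOn ℝ Set.univ f) (hf1 : f 1 = 0)
    (δ : ℝ) (hδ : 0 < δ) (r : Ω → ℝ) (hr : r ∈ Uf μ f δ)
    (A : Set Ω) (hA : MeasurableSet A) (h0 : 0 < μ A) (h1 : μ A < 1) :
    let rbar : Ω → ℝ := fun ω =>
      if ω ∈ A then (∫ x in A, r x ∂μ) / (μ A).toReal
      else (∫ x in Aᶜ, r x ∂μ) / (μ Aᶜ).toReal
    rbar ∈ Uf μ f δ ∧ (∫ ω in A, rbar ω ∂μ) = ∫ ω in A, r ω ∂μ :=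
  stmt15_general μ f hconv δ r hr A hA
end
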